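/- arXiv:1701.02104 — 12 statements merged into one kernel-verified Lean document; each statement's English description precedes it below -/
import Mathlib

section
/- The ideal I = (3+√-7) in the ring ℤ[√-7] has no factorization as a product of proper 2-absorbing ideals. -/
/-!
Every factor `J` contains `(3 + √-7) ∋ 16 = 2⁴`; being 2-absorbing it contains `4`, and being
proper it lies in `P = (2, 1 + √-7)`, because an element outside `P` has odd norm, coprime to `4`.
At most one factor is impossible since `4 ∉ (3 + √-7)`; two or more factors would force
`3 + √-7 ∈ P² ⊆ (2)`.
-/

/-- An ideal is 2-absorbing if whenever a product of three elements lies in it,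
the product of some two of them lies in it. -/
def IsTwoAbsorbing {R : Type*} [CommRing R] (I : Ideal R) : Prop :=
  ∀ a b c : R, a * b * c ∈ I → a * b ∈ I ∨ a * c ∈ I ∨ b * c ∈ I

/-- A TAF-ring: every proper ideal is a finite product of proper 2-absorbing ideals. -/
def IsTAFRing (R : Type*) [CommRing R] : Prop :=
  ∀ I : Ideal R, I ≠ ⊤ → ∃ (n : ℕ) (J : Fin n → Ideal R),
    (∀ i, J i ≠ ⊤ ∧ IsTwoAbsorbing (J i)) ∧ I = ∏ i, J i

theorem IsTwoAbsorbing.sq_mem_of_pow_mem {R : Type*} [CommRing R] {I : Ideal R}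
    (hI : IsTwoAbsorbing I) {x : R} {n : ℕ} (hn : 2 ≤ n) (hx : x ^ n ∈ I) : x ^ 2 ∈ I := by
  induction n, hn using Nat.le_induction with
  | base => exact hx
  | succ n hn ih =>
    obtain ⟨k, rfl⟩ := Nat.exists_eq_add_of_le' hn
    rcases hI x x (x ^ (k + 1)) (by convert hx using 1; ring) with h | h | h
    · rwa [sq]
    · exact ih (by convert h using 1; ring)
    · exact ih (by convert h using 1; ring)

namespace Zsqrtd

section

variable {d : ℤ}

/-- `RingHom.ker (toZModTwo hd)` is the prime `(2, 1 + √d)` above `2`. -/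
def toZModTwo (hd : Odd d) : ℤ√d →+* ZMod 2 :=
  lift ⟨1, by rw [mul_one, eq_comm, ZMod.intCast_eq_one_iff_odd]; exact hd⟩

theorem mem_ker_toZModTwo (hd : Odd d) {a : ℤ√d} :
    a ∈ RingHom.ker (toZModTwo hd) ↔ Even (a.re + a.im) := by
  rw [RingHom.mem_ker, toZModTwo, lift_apply_apply, mul_one, ← Int.cast_add,
    ZMod.intCast_eq_zero_iff_even]

theorem odd_norm_of_odd_re_add_im (hd : Odd d) {a : ℤ√d} (ha : Odd (a.re + a.im)) :
    Odd a.norm := by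
  have hd' : ¬Even d := Int.not_even_iff_odd.mpr hd
  rw [norm_def]
  simpa [parity_simps, Int.odd_mul, hd'] using ha

theorem le_ker_toZModTwo_of_two_sq_mem (hd : Odd d) {J : Ideal (ℤ√d)} (hJ : J ≠ ⊤)
    (h4 : (2 : ℤ√d) ^ 2 ∈ J) : J ≤ RingHom.ker (toZModTwo hd) := by
  intro a ha
  by_contra haP
  rw [mem_ker_toZModTwo, Int.not_even_iff_odd] at haP
  obtain ⟨k, hk⟩ := odd_norm_of_odd_re_add_im hd haP
  have hcop : IsCoprime (a.norm : ℤ√d) (2 ^ 2) := by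
    have : IsCoprime a.norm 2 := ⟨1, -k, by rw [hk]; ring⟩
    exact_mod_cast (this.pow_right (n := 2)).intCast (R := ℤ√d)
  have hnorm : (a.norm : ℤ√d) ∈ J := norm_eq_mul_conj a ▸ J.mul_mem_right _ ha
  obtain ⟨u, v, huv⟩ := hcop
  have hone : (1 : ℤ√d) ∈ J :=
    huv ▸ J.add_mem (J.mul_mem_left u hnorm) (J.mul_mem_left v h4)
  exact hJ ((Ideal.eq_top_iff_one J).2 hone)

theorem sq_ker_toZModTwo_le_span_two (hd : Odd d) :
    RingHom.ker (toZModTwo hd) ^ 2 ≤ Ideal.span {2} := by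
  obtain ⟨e, he⟩ := hd
  rw [sq, Ideal.mul_le]
  intro a ha b hb
  obtain ⟨p, hp⟩ := (mem_ker_toZModTwo ⟨e, he⟩).1 ha
  obtain ⟨q, hq⟩ := (mem_ker_toZModTwo ⟨e, he⟩).1 hb
  have ha' : a.re = p + p - a.im := by omega
  have hb' : b.re = q + q - b.im := by omega
  rw [Ideal.mem_span_singleton, ← Int.cast_two, intCast_dvd, re_mul, im_mul, ha', hb']
  exact ⟨⟨2 * p * q - p * b.im - q * a.im + (e + 1) * a.im * b.im,
    by linear_combination a.im * b.im * he⟩, ⟨p * b.im + q * a.im - a.im * b.im, by ring⟩⟩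

end

theorem two_pow_four_mem_span_three_add_sqrt_neg_seven :
    (2 : ℤ√(-7)) ^ 4 ∈ Ideal.span {⟨3, 1⟩} :=
  Ideal.mem_span_singleton.2 ⟨⟨3, -1⟩, by ext <;> simp <;> norm_num⟩

theorem three_add_sqrt_neg_seven_not_dvd_two_sq : ¬ (⟨3, 1⟩ : ℤ√(-7)) ∣ 2 ^ 2 := by
  rintro ⟨c, hc⟩
  have hre := congrArg re hc
  have him := congrArg im hc
  simp [sq] at hre him
  omega

theorem two_not_dvd_three_add_sqrt_neg_seven : ¬ (2 : ℤ√(-7)) ∣ ⟨3, 1⟩ := by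
  rw [← Int.cast_two, intCast_dvd]
  decide

end Zsqrtd

open Zsqrtd in
theorem no_TA_factorization_of_span_three_add_sqrt_neg_seven :
    ¬ ∃ (n : ℕ) (J : Fin n → Ideal (Zsqrtd (-7))),
      (∀ i, J i ≠ ⊤ ∧ IsTwoAbsorbing (J i)) ∧
      Ideal.span {(⟨3, 1⟩ : Zsqrtd (-7))} = ∏ i, J i := by
  rintro ⟨n, J, hJ, hprod⟩
  have hd : Odd (-7 : ℤ) := by decide
  set P := RingHom.ker (toZModTwo hd)
  have h16 (i) : (2 : ℤ√(-7)) ^ 4 ∈ J i :=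
    Ideal.le_of_dvd (Finset.dvd_prod_of_mem J (Finset.mem_univ i))
      (hprod ▸ two_pow_four_mem_span_three_add_sqrt_neg_seven)
  have h4 (i) : (2 : ℤ√(-7)) ^ 2 ∈ J i := (hJ i).2.sq_mem_of_pow_mem (by norm_num) (h16 i)
  rcases lt_or_ge n 2 with hn | hn
  · have h4n : ((2 : ℤ√(-7)) ^ 2) ^ n ∈ ∏ i, J i :=
      Fin.prod_const n ((2 : ℤ√(-7)) ^ 2) ▸ Ideal.prod_mem_prod fun i _ => h4 i
    rw [← hprod, Ideal.mem_span_singleton] at h4n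
    exact three_add_sqrt_neg_seven_not_dvd_two_sq <|
      h4n.trans ((pow_dvd_pow _ (Nat.lt_succ_iff.1 hn)).trans (pow_one _).dvd)
  · have hJP : ∏ i, J i ≤ P ^ 2 := calc
      ∏ i, J i ≤ P ^ n := by
        simpa using Finset.prod_le_pow_card Finset.univ J P fun i _ =>
          le_ker_toZModTwo_of_two_sq_mem hd (hJ i).1 (h4 i)
      _ ≤ P ^ 2 := Ideal.pow_le_pow_right hn
    exact two_not_dvd_three_add_sqrt_neg_seven <| Ideal.mem_span_singleton.1 <|
      sq_ker_toZModTwo_le_span_two hd (hJP (hprod ▸ Ideal.mem_span_singleton_self _))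
end

section
/- If R is a TAF-ring (every proper ideal is a product of 2-absorbing ideals), then every proper ideal of R has only finitely many minimal prime ideals. -/
section Aux

variable {R : Type*} [CommRing R]

/-- In a 2-absorbing ideal, any power membership implies square membership. -/
lemma sq_mem_of_pow_mem {J : Ideal R} (hJ : IsTwoAbsorbing J) :
    ∀ (n : ℕ) (w : R), w ^ n ∈ J → w ^ 2 ∈ J := by
  intro n
  induction n using Nat.strong_induction_on with
  | _ n ih =>
    intro w hw
    match n, hw with
    | 0, hw =>
      have : (1 : R) ∈ J := by simpa using hw
      simpa using J.mul_mem_left (w ^ 2) this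
    | 1, hw =>
      have : w ∈ J := by simpa using hw
      have : w * w ∈ J := J.mul_mem_left w this
      simpa [pow_two] using this
    | 2, hw => exact hw
    | (n + 3), hw =>
      have h3 : w ^ (n + 1) * w * w ∈ J := by
        have e : w ^ (n + 1) * w * w = w ^ (n + 3) := by ring
        rw [e]; exact hw
      rcases hJ _ _ _ h3 with h | h | h
      · exact ih (n + 2) (by omega) w (by rw [show w ^ (n + 2) = w ^ (n + 1) * w by ring]; exact h)
      · exact ih (n + 2) (by omega) w (by rw [show w ^ (n + 2) = w ^ (n + 1) * w by ring]; exact h)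
      · rw [pow_two]; exact h

/-- The radical of a 2-absorbing ideal is 2-absorbing. -/
lemma twoAbsorbing_radical {J : Ideal R} (hJ : IsTwoAbsorbing J) :
    IsTwoAbsorbing J.radical := by
  intro a b c habc
  obtain ⟨n, hn⟩ := habc
  have h2 : (a * b * c) ^ 2 ∈ J := sq_mem_of_pow_mem hJ n _ hn
  have h2' : a ^ 2 * b ^ 2 * c ^ 2 ∈ J := by
    rw [show a ^ 2 * b ^ 2 * c ^ 2 = (a * b * c) ^ 2 by ring]; exact h2
  rcases hJ _ _ _ h2' with h | h | h
  · exact Or.inl ⟨2, by rw [mul_pow]; exact h⟩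
  · exact Or.inr (Or.inl ⟨2, by rw [mul_pow]; exact h⟩)
  · exact Or.inr (Or.inr ⟨2, by rw [mul_pow]; exact h⟩)

/-- For a radical 2-absorbing ideal `K` with a "witness of non-primeness" `x*y ∈ K`,
`x, y ∉ K`, the colon ideal `(K : x)` is prime. -/
lemma colon_isPrime {K : Ideal R} (hK2 : IsTwoAbsorbing K)
    (hKrad : ∀ w : R, w ^ 2 ∈ K → w ∈ K)
    {x y : R} (hx : x ∉ K) (hy : y ∉ K) (hxy : x * y ∈ K) :
    (K.colon (Ideal.span {x})).IsPrime := by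
  constructor
  · intro htop
    have h1 : (1 : R) ∈ K.colon (Ideal.span {x}) := htop ▸ Submodule.mem_top
    exact hx (by simpa using Ideal.mem_colon_span_singleton.1 h1)
  · intro a b hab
    rw [Ideal.mem_colon_span_singleton] at hab
    rw [Ideal.mem_colon_span_singleton, Ideal.mem_colon_span_singleton]
    by_contra hcon
    push_neg at hcon
    obtain ⟨hax, hbx⟩ := hcon
    rcases hK2 a b x hab with h | h | h
    · -- h : a * b ∈ K
      have key : ∀ u v : R, u * v * x ∈ K → u * v ∈ K → u * x ∉ K → v * x ∉ K → u * y ∈ K := by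
        intro u v huvx huv hux hvx
        have h1 : u * (v + y) * x ∈ K := by
          rw [show u * (v + y) * x = u * v * x + u * (x * y) by ring]
          exact K.add_mem huvx (K.mul_mem_left u hxy)
        rcases hK2 u (v + y) x h1 with h2 | h2 | h2
        · rw [show u * y = u * (v + y) - u * v by ring]
          exact K.sub_mem h2 huv
        · exact absurd h2 hux
        · refine absurd ?_ hvx
          rw [show v * x = (v + y) * x - x * y by ring]
          exact K.sub_mem h2 hxy
      have hay : a * y ∈ K := key a b hab h hax hbx
      have hby : b * y ∈ K := key b a (by rwa [show b * a * x = a * b * x by ring])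
        (by rwa [mul_comm]) hbx hax
      have hfin : (a + y) * (b + y) * x ∈ K := by
        rw [show (a + y) * (b + y) * x = a * b * x + (a * y) * x + (b * y) * x + y * (x * y)
          by ring]
        exact K.add_mem (K.add_mem (K.add_mem hab (K.mul_mem_right x hay))
          (K.mul_mem_right x hby)) (K.mul_mem_left y hxy)
      rcases hK2 (a + y) (b + y) x hfin with h2 | h2 | h2
      · have hy2 : y ^ 2 ∈ K := by
          rw [show y ^ 2 = (a + y) * (b + y) - a * b - a * y - b * y by ring]
          exact K.sub_mem (K.sub_mem (K.sub_mem h2 h) hay) hby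
        exact absurd (hKrad y hy2) hy
      · refine absurd ?_ hax
        rw [show a * x = (a + y) * x - x * y by ring]
        exact K.sub_mem h2 hxy
      · refine absurd ?_ hbx
        rw [show b * x = (b + y) * x - x * y by ring]
        exact K.sub_mem h2 hxy
    · exact absurd h hax
    · exact absurd h hbx

/-- For a radical 2-absorbing ideal, `z*x ∈ K` and `z*y ∈ K` with `x*y ∈ K`,
`x, y ∉ K` force `z ∈ K`. -/
lemma mem_of_mul_mem {K : Ideal R} (hK2 : IsTwoAbsorbing K)
    (hKrad : ∀ w : R, w ^ 2 ∈ K → w ∈ K)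
    {x y z : R} (hx : x ∉ K) (hy : y ∉ K) (hxy : x * y ∈ K)
    (hzx : z * x ∈ K) (hzy : z * y ∈ K) : z ∈ K := by
  have h1 : (z + x) * (z + y) * (x + y) ∈ K := by
    rw [show (z + x) * (z + y) * (x + y)
      = (z + x + y) * (z * x) + (z + x + y) * (z * y) + (x + y) * (x * y) by ring]
    exact K.add_mem (K.add_mem (K.mul_mem_left _ hzx) (K.mul_mem_left _ hzy))
      (K.mul_mem_left _ hxy)
  rcases hK2 _ _ _ h1 with h2 | h2 | h2
  · apply hKrad
    rw [show z ^ 2 = (z + x) * (z + y) - z * x - z * y - x * y by ring]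
    exact K.sub_mem (K.sub_mem (K.sub_mem h2 hzx) hzy) hxy
  · exact absurd (hKrad x (by
      rw [show x ^ 2 = (z + x) * (x + y) - z * x - z * y - x * y by ring]
      exact K.sub_mem (K.sub_mem (K.sub_mem h2 hzx) hzy) hxy)) hx
  · exact absurd (hKrad y (by
      rw [show y ^ 2 = (z + y) * (x + y) - z * x - z * y - x * y by ring]
      exact K.sub_mem (K.sub_mem (K.sub_mem h2 hzx) hzy) hxy)) hy

/-- Badawi: a 2-absorbing ideal has finitely many (in fact at most two) minimal primes. -/
lemma minimalPrimes_finite_of_twoAbsorbing (J : Ideal R) (hJ : IsTwoAbsorbing J) :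
    J.minimalPrimes.Finite := by
  set K := J.radical with hKdef
  have hK2 : IsTwoAbsorbing K := twoAbsorbing_radical hJ
  have hKrad : ∀ w : R, w ^ 2 ∈ K → w ∈ K := by
    intro w hw
    have : w ∈ K.radical := ⟨2, hw⟩
    rwa [hKdef, Ideal.radical_idem] at this
  have hsame : J.minimalPrimes = K.minimalPrimes := by
    have hiff : ∀ q : Ideal R, (q.IsPrime ∧ J ≤ q) ↔ (q.IsPrime ∧ K ≤ q) := fun q =>
      and_congr_right fun hq => hq.radical_le_iff.symm
    unfold Ideal.minimalPrimes
    ext p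
    simp only [Set.mem_setOf_eq]
    constructor
    · intro hp
      exact ⟨(hiff p).1 hp.1, fun q hq hqp => hp.2 ((hiff q).2 hq) hqp⟩
    · intro hp
      exact ⟨(hiff p).2 hp.1, fun q hq hqp => hp.2 ((hiff q).1 hq) hqp⟩
  rw [hsame]
  by_cases hex : ∃ x y : R, x ∉ K ∧ y ∉ K ∧ x * y ∈ K
  · obtain ⟨x, y, hx, hy, hxy⟩ := hex
    set P := K.colon (Ideal.span {x}) with hPdef
    set Q := K.colon (Ideal.span {y}) with hQdef
    have hP : P.IsPrime := colon_isPrime hK2 hKrad hx hy hxy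
    have hQ : Q.IsPrime := colon_isPrime hK2 hKrad hy hx (by rwa [mul_comm])
    have hKP : K ≤ P := fun z hz => Ideal.mem_colon_span_singleton.2 (K.mul_mem_right x hz)
    have hKQ : K ≤ Q := fun z hz => Ideal.mem_colon_span_singleton.2 (K.mul_mem_right y hz)
    have hsub : K.minimalPrimes ⊆ {P, Q} := by
      intro p hp
      obtain ⟨⟨hpp, hKp⟩, hmin⟩ := hp
      have hinf : P ⊓ Q ≤ p := by
        intro z hz
        obtain ⟨hzP, hzQ⟩ := hz
        exact hKp (mem_of_mul_mem hK2 hKrad hx hy hxy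
          (Ideal.mem_colon_span_singleton.1 hzP) (Ideal.mem_colon_span_singleton.1 hzQ))
      rcases hpp.mul_le.1 (le_trans Ideal.mul_le_inf hinf) with hle | hle
      · left
        exact le_antisymm (hmin ⟨hP, hKP⟩ hle) hle
      · right
        exact le_antisymm (hmin ⟨hQ, hKQ⟩ hle) hle
    exact Set.Finite.subset ((Set.finite_singleton Q).insert P) hsub
  · push_neg at hex
    by_cases htop : K = ⊤
    · have : K.minimalPrimes ⊆ ∅ := by
        intro p hp
        exact absurd (top_le_iff.1 (htop ▸ hp.1.2)) hp.1.1.ne_top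
      exact Set.Finite.subset Set.finite_empty this
    · have hKprime : K.IsPrime := by
        constructor
        · exact htop
        · intro a b hab
          by_contra hcon
          push_neg at hcon
          exact hex a b hcon.1 hcon.2 hab
      have hsub : K.minimalPrimes ⊆ {K} := by
        intro p hp
        exact le_antisymm (hp.2 ⟨hKprime, le_refl K⟩ hp.1.2) hp.1.2
      exact Set.Finite.subset (Set.finite_singleton K) hsub

end Aux

theorem minimalPrimes_finite_of_TAF {R : Type*} [CommRing R] (h : IsTAFRing R)
    (I : Ideal R) (hI : I ≠ ⊤) : I.minimalPrimes.Finite := by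
  obtain ⟨n, J, hJ, hprod⟩ := h I hI
  have hsub : I.minimalPrimes ⊆ ⋃ i, (J i).minimalPrimes := by
    intro p hp
    haveI hpp : p.IsPrime := hp.1.1
    have hle : ∏ i, J i ≤ p := hprod ▸ hp.1.2
    obtain ⟨i, _, hi⟩ := hpp.prod_le.1 hle
    obtain ⟨q, hq, hqp⟩ := Ideal.exists_minimalPrimes_le hi
    have hIq : I ≤ q := by
      rw [hprod]
      exact le_trans Ideal.prod_le_inf
        (le_trans (Finset.inf_le (Finset.mem_univ i)) hq.1.2)
    have hpq : p = q := le_antisymm (hp.2 ⟨hq.1.1, hIq⟩ hqp) hqp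
    exact Set.mem_iUnion.2 ⟨i, hpq ▸ hq⟩
  exact Set.Finite.subset
    (Set.finite_iUnion fun i => minimalPrimes_finite_of_twoAbsorbing _ (hJ i).2) hsub
end

section
/- Any quotient ring R/I of a TAF-ring R is again a TAF-ring. -/
theorem TAF_quotient {R : Type*} [CommRing R] (h : IsTAFRing R) (I : Ideal R) :
    IsTAFRing (R ⧸ I) := by
  intro K hK
  set f := Ideal.Quotient.mk I with hf
  have hsurj : Function.Surjective f := Ideal.Quotient.mk_surjective
  have hJ : K.comap f ≠ ⊤ := by
    intro htop
    apply hK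
    rw [← Ideal.map_comap_of_surjective f hsurj K, htop, Ideal.map_top]
  obtain ⟨n, J, hJi, hprod⟩ := h (K.comap f) hJ
  have hIle : ∀ i, I ≤ J i := by
    intro i
    calc I ≤ K.comap f := fun x hx => by
            simp [f, Ideal.Quotient.eq_zero_iff_mem.2 hx]
      _ = ∏ j, J j := hprod
      _ ≤ J i := Ideal.prod_le_inf.trans (Finset.inf_le (Finset.mem_univ i))
  have hcomap_map : ∀ i, (Ideal.map f (J i)).comap f = J i := by
    intro i
    rw [Ideal.comap_map_of_surjective f hsurj (J i)]
    refine sup_eq_left.2 ?_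
    have hk : Ideal.comap f ⊥ = I := Ideal.mk_ker
    rw [hk]
    exact hIle i
  refine ⟨n, fun i => Ideal.map f (J i), fun i => ⟨?_, ?_⟩, ?_⟩
  · intro htop
    apply (hJi i).1
    have htop' : Ideal.map f (J i) = ⊤ := htop
    rw [← hcomap_map i, htop', Ideal.comap_top]
  · intro a b c habc
    obtain ⟨a', rfl⟩ := hsurj a
    obtain ⟨b', rfl⟩ := hsurj b
    obtain ⟨c', rfl⟩ := hsurj c
    have : a' * b' * c' ∈ J i := by
      rw [← hcomap_map i]; simpa using habc
    rcases (hJi i).2 a' b' c' this with h1 | h1 | h1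
    · exact Or.inl (by rw [← hcomap_map i] at h1; simpa using h1)
    · exact Or.inr (Or.inl (by rw [← hcomap_map i] at h1; simpa using h1))
    · exact Or.inr (Or.inr (by rw [← hcomap_map i] at h1; simpa using h1))
  · rw [← Ideal.map_comap_of_surjective f hsurj K, hprod]
    exact map_prod (Ideal.mapHom f) J Finset.univ
end

section
/- Any localization S⁻¹R of a TAF-ring R at a multiplicative set S is again a TAF-ring. -/
/-
An ideal `I` of `S⁻¹R` is the extension of its contraction, which is proper, so extending a
TAF-factorisation of the contraction factors `I`. Extension preserves 2-absorbing ideals (a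
denominator `w` with `w * (a * b * c) ∈ J` is absorbed into the factor `c`), and the factors that
extend to the unit ideal are dropped.
-/

theorem Fintype.exists_fin_prod_eq_prod_ne_one {ι M : Type*} [Fintype ι] [CommMonoid M]
    (f : ι → M) :
    ∃ (m : ℕ) (g : Fin m → M), (∀ k, g k ≠ 1 ∧ ∃ i, g k = f i) ∧ ∏ k, g k = ∏ i, f i := by
  classical
  let T := Finset.univ.filter fun i => f i ≠ 1
  refine ⟨T.card, fun k => f (T.equivFin.symm k),
    fun k => ⟨(Finset.mem_filter.1 (T.equivFin.symm k).2).2, _, rfl⟩, ?_⟩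
  rw [Equiv.prod_comp T.equivFin.symm fun i => f i, Finset.prod_coe_sort,
    Finset.prod_filter_ne_one]

namespace IsTwoAbsorbing

variable {R : Type*} [CommRing R] (S : Submonoid R) {S' : Type*} [CommRing S'] [Algebra R S']
  [IsLocalization S S']
include S

theorem of_under {I : Ideal S'} (hI : IsTwoAbsorbing (I.under R)) : IsTwoAbsorbing I := by
  intro x y z hxyz
  obtain ⟨a, s, rfl⟩ := IsLocalization.exists_mk'_eq S x
  obtain ⟨b, t, rfl⟩ := IsLocalization.exists_mk'_eq S y
  obtain ⟨c, u, rfl⟩ := IsLocalization.exists_mk'_eq S z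
  simp only [← IsLocalization.mk'_mul, IsLocalization.mk'_mem_iff] at hxyz ⊢
  exact hI a b c hxyz

theorem under_map {J : Ideal R} (hJ : IsTwoAbsorbing J) :
    IsTwoAbsorbing ((J.map (algebraMap R S')).under R) := by
  intro a b c habc
  simp only [Ideal.under_def, Ideal.mem_comap,
    IsLocalization.algebraMap_mem_map_algebraMap_iff S] at habc ⊢
  obtain ⟨w, hw, hwabc⟩ := habc
  rcases hJ a b (c * w) (by convert hwabc using 1; ring) with hab | hac | hbc
  · exact Or.inl ⟨1, S.one_mem, by rwa [one_mul]⟩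
  · exact Or.inr (Or.inl ⟨w, hw, by convert hac using 1; ring⟩)
  · exact Or.inr (Or.inr ⟨w, hw, by convert hbc using 1; ring⟩)

theorem map_algebraMap {J : Ideal R} (hJ : IsTwoAbsorbing J) :
    IsTwoAbsorbing (J.map (algebraMap R S')) :=
  of_under S (under_map S hJ)

end IsTwoAbsorbing

theorem TAF_localization {R : Type*} [CommRing R] (S : Submonoid R)
    (S' : Type*) [CommRing S'] [Algebra R S'] [IsLocalization S S']
    (h : IsTAFRing R) : IsTAFRing S' := by
  intro I hI
  obtain ⟨n, J, hJ, hIJ⟩ := h (I.under R) (Ideal.comap_ne_top _ hI)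
  have hI_prod : I = ∏ i, (J i).map (algebraMap R S') := by
    rw [← IsLocalization.map_under S S' I, hIJ]
    exact map_prod (Ideal.mapHom (algebraMap R S')) J Finset.univ
  obtain ⟨m, K, hK, hK_prod⟩ :=
    Fintype.exists_fin_prod_eq_prod_ne_one fun i => (J i).map (algebraMap R S')
  refine ⟨m, K, fun k => ?_, hI_prod.trans hK_prod.symm⟩
  obtain ⟨hne, i, hKi⟩ := hK k
  exact ⟨Ideal.one_eq_top (R := S') ▸ hne, hKi ▸ (hJ i).2.map_algebraMap S⟩
end

section
/- Two commutative rings A and B are both TAF-rings if and only if their direct product A × B is a TAF-ring. -/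
/-!
Ideals of `A × B` are the products `I × J = (I × B) * (A × J)`, and `I ↦ I × B` is multiplicative
and sends proper 2-absorbing ideals to proper 2-absorbing ones (their preimages under the
projection), so factorizations in `A` and `B` combine into one in `A × B`. Conversely, TAF descends
along any surjection `f : R → S`: factor the preimage of an ideal of `S` and push the factors
forward; each factor contains the preimage, hence `ker f`, which keeps its image proper and
2-absorbing.
-/

section

variable {R S : Type*} [CommRing R] [CommRing S]

theorem IsTwoAbsorbing.comap {J : Ideal S} (hJ : IsTwoAbsorbing J) (f : R →+* S) :
    IsTwoAbsorbing (J.comap f) := by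
  intro a b c habc
  simpa only [Ideal.mem_comap, map_mul] using hJ (f a) (f b) (f c) (by simpa using habc)

theorem IsTwoAbsorbing.map_of_surjective {f : R →+* S} (hf : Function.Surjective f)
    {J : Ideal R} (hker : RingHom.ker f ≤ J) (hJ : IsTwoAbsorbing J) :
    IsTwoAbsorbing (J.map f) := by
  have hJ' : (J.map f).comap f = J := by
    rw [Ideal.comap_map_of_surjective' f hf, sup_eq_left.mpr hker]
  intro x y z hxyz
  obtain ⟨a, rfl⟩ := hf x
  obtain ⟨b, rfl⟩ := hf y
  obtain ⟨c, rfl⟩ := hf z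
  rw [← map_mul, ← map_mul, ← Ideal.mem_comap, hJ'] at hxyz
  rcases hJ a b c hxyz with h | h | h <;>
    simp only [← map_mul, Ideal.mem_map_of_mem f h, true_or, or_true]

theorem Ideal.map_ne_top_of_surjective {f : R →+* S} (hf : Function.Surjective f)
    {J : Ideal R} (hker : RingHom.ker f ≤ J) (hJ : J ≠ ⊤) : J.map f ≠ ⊤ := by
  rwa [ne_eq, ← Ideal.comap_eq_top_iff (f := f), Ideal.comap_map_of_surjective' f hf,
    sup_eq_left.mpr hker]

variable (R) in
def twoAbsorbingProducts : Submonoid (Ideal R) :=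
  Submonoid.closure {J | J ≠ ⊤ ∧ IsTwoAbsorbing J}

theorem isTAFRing_iff_forall_mem_twoAbsorbingProducts :
    IsTAFRing R ↔ ∀ I : Ideal R, I ∈ twoAbsorbingProducts R := by
  constructor
  · intro h I
    by_cases hI : I = ⊤
    · rw [hI, ← Ideal.one_eq_top]
      exact one_mem _
    obtain ⟨n, J, hJ, rfl⟩ := h I hI
    exact Submonoid.prod_mem _ fun i _ => Submonoid.subset_closure (hJ i)
  · intro h I _
    obtain ⟨l, hl, rfl⟩ := Submonoid.exists_list_of_mem_closure (h I)
    exact ⟨l.length, fun i => l[i.1], fun i => hl _ (List.getElem_mem _),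
      (Fin.prod_univ_getElem l).symm⟩

theorem map_mem_twoAbsorbingProducts {f : R →+* S} (hf : Function.Surjective f) {I : Ideal R}
    (hI : I ∈ twoAbsorbingProducts R) (hker : RingHom.ker f ≤ I) :
    I.map f ∈ twoAbsorbingProducts S := by
  induction hI using Submonoid.closure_induction with
  | mem J hJ =>
    exact Submonoid.subset_closure
      ⟨Ideal.map_ne_top_of_surjective hf hker hJ.1, hJ.2.map_of_surjective hf hker⟩
  | one => simpa only [Ideal.one_eq_top, Ideal.map_top] using (twoAbsorbingProducts S).one_mem
  | mul J K _ _ hJ hK =>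
    rw [Ideal.map_mul]
    exact mul_mem (hJ (hker.trans Ideal.mul_le_left)) (hK (hker.trans Ideal.mul_le_right))

theorem IsTAFRing.of_surjective (h : IsTAFRing R) {f : R →+* S} (hf : Function.Surjective f) :
    IsTAFRing S := by
  rw [isTAFRing_iff_forall_mem_twoAbsorbingProducts] at h ⊢
  intro I
  rw [← Ideal.map_comap_of_surjective f hf I]
  exact map_mem_twoAbsorbingProducts hf (h _) (Ideal.comap_mono bot_le)

theorem Ideal.prod_mul_prod (I I' : Ideal R) (J J' : Ideal S) :
    I.prod J * I'.prod J' = (I * I').prod (J * J') := by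
  rw [ideal_prod_eq (I.prod J * I'.prod J'), Ideal.map_mul, Ideal.map_mul]
  simp only [map_fst_prod, map_snd_prod]

theorem Ideal.prod_top_eq_comap (I : Ideal R) :
    I.prod (⊤ : Ideal S) = I.comap (RingHom.fst R S) := by
  ext; simp

theorem prod_top_mem_twoAbsorbingProducts {I : Ideal R} (hI : I ∈ twoAbsorbingProducts R) :
    I.prod (⊤ : Ideal S) ∈ twoAbsorbingProducts (R × S) := by
  induction hI using Submonoid.closure_induction with
  | mem J hJ =>
    rw [Ideal.prod_top_eq_comap (S := S)]
    exact Submonoid.subset_closure ⟨Ideal.comap_ne_top _ hJ.1, hJ.2.comap _⟩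
  | one =>
    simpa only [Ideal.one_eq_top, Ideal.prod_top_top] using (twoAbsorbingProducts (R × S)).one_mem
  | mul J K _ _ hJ hK => simpa only [Ideal.prod_mul_prod, Ideal.mul_top] using mul_mem hJ hK

theorem prod_mem_twoAbsorbingProducts {I : Ideal R} {J : Ideal S}
    (hI : I ∈ twoAbsorbingProducts R) (hJ : J ∈ twoAbsorbingProducts S) :
    I.prod J ∈ twoAbsorbingProducts (R × S) := by
  have hJ' : (⊤ : Ideal R).prod J ∈ twoAbsorbingProducts (R × S) := by
    rw [← Ideal.map_prodComm_prod]
    exact map_mem_twoAbsorbingProducts RingEquiv.prodComm.surjective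
      (prod_top_mem_twoAbsorbingProducts hJ) (by simp)
  simpa only [Ideal.prod_mul_prod, Ideal.mul_top, Ideal.top_mul] using
    mul_mem (prod_top_mem_twoAbsorbingProducts hI) hJ'

end

theorem TAF_prod_iff {A B : Type*} [CommRing A] [CommRing B] :
    (IsTAFRing A ∧ IsTAFRing B) ↔ IsTAFRing (A × B) := by
  refine ⟨fun ⟨hA, hB⟩ => ?_, fun h =>
    ⟨h.of_surjective (f := RingHom.fst A B) Prod.fst_surjective,
      h.of_surjective (f := RingHom.snd A B) Prod.snd_surjective⟩⟩
  rw [isTAFRing_iff_forall_mem_twoAbsorbingProducts] at hA hB ⊢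
  intro I
  rw [I.ideal_prod_eq]
  exact prod_mem_twoAbsorbingProducts (hA _) (hB _)
end

section
/- Let R be a TAF-ring, M a maximal ideal of R, and I an ideal with √I = M. Then I and M² are comparable under inclusion (I ⊆ M² or M² ⊆ I). -/
lemma sq_mem_of_twoAbsorbing {R : Type*} [CommRing R] {I : Ideal R}
    (h2 : IsTwoAbsorbing I) {x : R} (hx : x ∈ I.radical) : x * x ∈ I := by
  obtain ⟨n, hn⟩ := hx
  induction n using Nat.strong_induction_on with
  | _ n ih =>
    match n, hn with
    | 0, hn => simpa using I.mul_mem_left (x * x) hn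
    | 1, hn => exact I.mul_mem_left x (by simpa using hn)
    | 2, hn => simpa [sq] using hn
    | (m+3), hn =>
      have h3 : x * x * x ^ (m+1) ∈ I := by
        rw [show x * x * x ^ (m+1) = x ^ (m+3) by ring]; exact hn
      rcases h2 x x (x ^ (m+1)) h3 with h | h | h
      · exact h
      · exact ih (m+2) (by omega) (by rw [show x ^ (m+2) = x * x ^ (m+1) by ring]; exact h)
      · exact ih (m+2) (by omega) (by rw [show x ^ (m+2) = x * x ^ (m+1) by ring]; exact h)

lemma mul_mem_of_twoAbsorbing {R : Type*} [CommRing R] {I : Ideal R}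
    (h2 : IsTwoAbsorbing I) {x y : R} (hx : x ∈ I.radical) (hy : y ∈ I.radical) :
    x * y ∈ I := by
  have hx2 : x * x ∈ I := sq_mem_of_twoAbsorbing h2 hx
  have hy2 : y * y ∈ I := sq_mem_of_twoAbsorbing h2 hy
  have key : x * y * (x + y) ∈ I := by
    have : x * y * (x + y) = y * (x * x) + x * (y * y) := by ring
    rw [this]
    exact I.add_mem (I.mul_mem_left y hx2) (I.mul_mem_left x hy2)
  rcases h2 x y (x + y) key with h | h | h
  · exact h
  · have : x * y = x * (x + y) - x * x := by ring
    rw [this]; exact I.sub_mem h hx2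
  · have : x * y = y * (x + y) - y * y := by ring
    rw [this]; exact I.sub_mem h hy2

theorem TAF_comparable_with_sq_of_radical_maximal {R : Type*} [CommRing R]
    (h : IsTAFRing R) (M : Ideal R) (hM : M.IsMaximal) (I : Ideal R)
    (hrad : I.radical = M) : I ≤ M ^ 2 ∨ M ^ 2 ≤ I := by
  have hIne : I ≠ ⊤ := by
    intro hI
    exact hM.ne_top (by rw [← hrad, hI, Ideal.radical_top])
  obtain ⟨n, J, hJ, hprod⟩ := h I hIne
  -- each factor contains I, hence has radical M
  have hle : ∀ i, I ≤ J i := fun i => by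
    rw [hprod]; exact le_trans Ideal.prod_le_inf (Finset.inf_le (Finset.mem_univ i))
  have hradJ : ∀ i, (J i).radical = M := by
    intro i
    have h1 : M ≤ (J i).radical := hrad ▸ Ideal.radical_mono (hle i)
    have h2 : (J i).radical ≠ ⊤ := by
      rw [Ne, Ideal.radical_eq_top]; exact (hJ i).1
    exact ((hM.eq_of_le h2 h1)).symm
  have hM2le : ∀ i, M ^ 2 ≤ J i := by
    intro i
    rw [sq, Ideal.mul_le]
    intro r hr s hs
    exact mul_mem_of_twoAbsorbing (hJ i).2 ((hradJ i) ▸ hr) ((hradJ i) ▸ hs)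
  have hJleM : ∀ i, J i ≤ M := fun i => (hradJ i) ▸ Ideal.le_radical
  match n, J, hJ, hprod, hle, hradJ, hM2le, hJleM with
  | 0, J, hJ, hprod, _, _, _, _ =>
    exact absurd (by simpa using hprod) hIne
  | 1, J, hJ, hprod, _, _, hM2le, _ =>
    right
    rw [hprod, show (∏ i, J i) = J 0 by simp]
    exact hM2le 0
  | (m+2), J, hJ, hprod, _, _, _, hJleM =>
    left
    rw [hprod, ← Finset.mul_prod_erase Finset.univ J (Finset.mem_univ (0 : Fin (m+2))), sq]
    refine Ideal.mul_mono (hJleM 0) ?_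
    refine le_trans (le_trans Ideal.prod_le_inf (Finset.inf_le ?_)) (hJleM 1)
    simp [Finset.mem_erase]
end

section
/- The ring ℤ/8ℤ[X]/(X², 2X) is not a TAF-ring: the ideal generated by the image x of X and the square of the maximal ideal (2, x) are incomparable under inclusion. -/
noncomputable abbrev A7 : Type :=
  Polynomial (ZMod 8) ⧸
    (Ideal.span {Polynomial.X ^ 2, 2 * Polynomial.X} : Ideal (Polynomial (ZMod 8)))

noncomputable abbrev x7 : A7 := Ideal.Quotient.mk _ Polynomial.X

noncomputable abbrev M7 : Ideal A7 := Ideal.span {(2 : A7), x7}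

/-! The ring `A = ℤ/8[X]/(X², 2X)` is local with maximal ideal `M = (2, x)`, and `M² = (4)`.
In a local TAF-ring a proper ideal is a product of proper 2-absorbing ideals, so it is either
itself 2-absorbing (one factor) or contained in `M²` (at least two factors). Neither holds for
`(x)`: it contains `2³ = 0` but not `2² = 4`, and `x ∉ (4)`. The two non-memberships are
witnessed by the maps `A → ℤ/8` (`x ↦ 0`), which kills `x` but not `4`, and `A → 𝔽₂[ε]`
(`x ↦ ε`), which kills `4` but not `x`. -/

open Polynomial IsLocalRing DualNumber

section

variable {R : Type*} [CommRing R]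

theorem IsTwoAbsorbing.sq_mem_of_pow_three_mem {I : Ideal R} (hI : IsTwoAbsorbing I) {a : R}
    (h : a ^ 3 ∈ I) : a ^ 2 ∈ I := by
  rw [pow_two]
  rcases hI a a a (by rwa [← pow_three']) with h | h | h <;> exact h

theorem IsTAFRing.isTwoAbsorbing_or_le_maximalIdeal_sq [IsLocalRing R] (hR : IsTAFRing R)
    {I : Ideal R} (hI : I ≠ ⊤) : IsTwoAbsorbing I ∨ I ≤ maximalIdeal R ^ 2 := by
  obtain ⟨n, J, hJ, rfl⟩ := hR I hI
  match n, J, hJ with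
  | 0, _, _ => exact absurd (by simp) hI
  | 1, J, hJ => exact .inl (by simpa using (hJ 0).2)
  | n + 2, J, hJ =>
    have hle (i) : J i ≤ maximalIdeal R := le_maximalIdeal (hJ i).1
    rw [Fin.prod_univ_succ, Fin.prod_univ_succ, ← mul_assoc, pow_two]
    exact .inr (Ideal.mul_le_left.trans (Ideal.mul_mono (hle 0) (hle 1)))

theorem IsLocalRing.of_forall_notMem_isUnit {M : Ideal R} (hM : M ≠ ⊤)
    (h : ∀ a ∉ M, IsUnit a) : IsLocalRing R :=
  have hnu (a : R) (ha : a ∈ M) : ¬IsUnit a := fun hu => hM (M.eq_top_of_isUnit_mem ha hu)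
  have : Nontrivial R := nontrivial_of_ne 0 1 fun h01 => hnu 0 M.zero_mem (h01 ▸ isUnit_one)
  .of_nonunits_add fun a b ha hb =>
    hnu _ (M.add_mem (not_not.1 (mt (h a) ha)) (not_not.1 (mt (h b) hb)))

theorem IsLocalRing.maximalIdeal_eq_of_forall_notMem_isUnit [IsLocalRing R] {M : Ideal R}
    (hM : M ≠ ⊤) (h : ∀ a ∉ M, IsUnit a) : maximalIdeal R = M :=
  le_antisymm (fun a ha => not_not.1 fun haM => (mem_maximalIdeal a).1 ha (h a haM))
    (le_maximalIdeal hM)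

theorem Ideal.notMem_span_singleton_of_map {S : Type*} [CommRing S] (f : R →+* S) {a b : R}
    (hb : f b = 0) (ha : f a ≠ 0) : a ∉ Ideal.span {b} :=
  fun h => ha ((Ideal.span_singleton_le_iff_mem (RingHom.ker f)).2 hb h)

end

namespace A7

variable {S : Type*} [CommRing S]

noncomputable def lift (f : ZMod 8 →+* S) (s : S) (hs : s ^ 2 = 0) (h2s : 2 * s = 0) :
    A7 →+* S :=
  Ideal.Quotient.lift _ (eval₂RingHom f s) fun _ hp =>
    (Ideal.span_le (I := RingHom.ker _)).2 (by rintro _ (rfl | rfl) <;> simp [hs, h2s]) hp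

theorem lift_x7 (f : ZMod 8 →+* S) (s : S) (hs : s ^ 2 = 0) (h2s : 2 * s = 0) :
    lift f s hs h2s x7 = s :=
  (Ideal.Quotient.lift_mk _ _ _).trans (eval₂_X f s)

theorem exists_eq_algebraMap_add_x7_mul (a : A7) :
    ∃ (c : ZMod 8) (b : A7), a = algebraMap (ZMod 8) A7 c + x7 * b := by
  obtain ⟨p, rfl⟩ := Ideal.Quotient.mk_surjective a
  refine ⟨p.coeff 0, Ideal.Quotient.mk _ p.divX, ?_⟩
  conv_lhs => rw [← X_mul_divX_add p]
  rw [map_add, map_mul, add_comm]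
  rfl

theorem x7_sq : x7 ^ 2 = 0 :=
  Ideal.Quotient.eq_zero_iff_mem.2 (Ideal.subset_span (by simp))

theorem two_mul_x7 : 2 * x7 = 0 :=
  Ideal.Quotient.eq_zero_iff_mem.2 (Ideal.subset_span (by simp))

theorem eight_eq_zero : (8 : A7) = 0 := by
  rw [← map_ofNat (algebraMap (ZMod 8) A7), show (8 : ZMod 8) = 0 from rfl, map_zero]

theorem M7_sq : M7 ^ 2 = Ideal.span {4} := by
  rw [sq M7, Ideal.span_pair_mul_span_pair, ← sq x7, x7_sq, mul_comm x7, two_mul_x7]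
  norm_num [Submodule.span_insert_zero]

theorem four_notMem_span_x7 : (4 : A7) ∉ Ideal.span {x7} :=
  Ideal.notMem_span_singleton_of_map (lift (RingHom.id _) 0 (by simp) (by simp))
    (lift_x7 ..) (by rw [map_ofNat]; decide)

theorem x7_notMem_M7_sq : x7 ∉ M7 ^ 2 := by
  have h2 : (2 : DualNumber (ZMod 2)) = 0 :=
    (map_ofNat (algebraMap (ZMod 2) _) 2).symm.trans (map_zero _)
  let f := lift ((algebraMap (ZMod 2) _).comp (ZMod.castHom (by norm_num) _))
    (ε : DualNumber (ZMod 2)) (by rw [pow_two, eps_mul_eps]) (by rw [h2, zero_mul])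
  rw [M7_sq]
  refine Ideal.notMem_span_singleton_of_map f ?_ ?_
  · rw [map_ofNat, show (4 : DualNumber (ZMod 2)) = 2 * 2 by norm_num, h2, zero_mul]
  · rw [lift_x7]
    exact fun h => one_ne_zero (congrArg TrivSqZeroExt.snd h)

theorem M7_ne_top : M7 ≠ ⊤ := fun h =>
  x7_notMem_M7_sq (by rw [h, Ideal.top_pow]; trivial)

theorem isUnit_of_notMem_M7 {a : A7} (ha : a ∉ M7) : IsUnit a := by
  obtain ⟨c, b, rfl⟩ := exists_eq_algebraMap_add_x7_mul a
  have hxb : IsNilpotent (x7 * b) := ⟨2, by rw [mul_pow, x7_sq, zero_mul]⟩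
  have hparity : ∀ c : ZMod 8, (∃ d, c = 2 * d) ∨ ∃ e, c * e = 1 := by decide
  rcases hparity c with ⟨d, rfl⟩ | ⟨e, he⟩
  · refine absurd (M7.add_mem ?_ (M7.mul_mem_right _ (Ideal.subset_span (by simp)))) ha
    rw [map_mul, map_ofNat]
    exact M7.mul_mem_right _ (Ideal.subset_span (by simp))
  · exact hxb.isUnit_add_left_of_commute ((IsUnit.of_mul_eq_one _ he).map _) (.all _ _)

instance : IsLocalRing A7 := .of_forall_notMem_isUnit M7_ne_top fun _ => isUnit_of_notMem_M7

theorem maximalIdeal_eq : maximalIdeal A7 = M7 :=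
  maximalIdeal_eq_of_forall_notMem_isUnit M7_ne_top fun _ => isUnit_of_notMem_M7

end A7

theorem Z8_example_not_TAF :
    ¬ IsTAFRing A7 ∧
    ¬ Ideal.span {x7} ≤ M7 ^ 2 ∧ ¬ M7 ^ 2 ≤ Ideal.span {x7} := by
  have hx : x7 ∈ Ideal.span {x7} := Ideal.mem_span_singleton_self x7
  refine ⟨fun hR => ?_, fun h => A7.x7_notMem_M7_sq (h hx),
    fun h => A7.four_notMem_span_x7 (h (A7.M7_sq ▸ Ideal.mem_span_singleton_self 4))⟩
  have hI : Ideal.span {x7} ≠ ⊤ := fun h => A7.four_notMem_span_x7 (h ▸ Submodule.mem_top)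
  rcases hR.isTwoAbsorbing_or_le_maximalIdeal_sq hI with habs | hle
  · have h8 : (2 : A7) ^ 3 ∈ Ideal.span {x7} := by
      rw [show (2 : A7) ^ 3 = 8 by norm_num, A7.eight_eq_zero]
      exact zero_mem _
    have h4 := habs.sq_mem_of_pow_three_mem h8
    norm_num at h4
    exact A7.four_notMem_span_x7 h4
  · exact A7.x7_notMem_M7_sq (A7.maximalIdeal_eq ▸ hle hx)
end

section
/- Let R be an arithmetical ring (every localization at a maximal ideal is a chained ring) and I a 2-absorbing ideal of R. Then I is a prime ideal or a product of two prime ideals. -/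
section Lemmas
variable {R : Type*} [CommRing R] {I : Ideal R}

lemma sq_mem_of_pow_mem_s9 (hTA : IsTwoAbsorbing I) :
    ∀ (n : ℕ) (x : R), x ^ n ∈ I → x ^ 2 ∈ I := by
  intro n
  induction n using Nat.strong_induction_on with
  | _ n ih =>
    intro x hx
    match n, hx with
    | 0, hx =>
      have h1 : (1:R) ∈ I := by simpa using hx
      have : x ^ 2 = x ^ 2 * 1 := by ring
      rw [this]; exact I.mul_mem_left _ h1
    | 1, hx =>
      have h1 : x ∈ I := by simpa using hx
      have : x ^ 2 = x * x := by ring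
      rw [this]; exact I.mul_mem_left x h1
    | 2, hx => exact hx
    | (m+3), hx =>
      have h3 : x * x * x ^ (m+1) ∈ I := by
        have : x * x * x ^ (m+1) = x ^ (m+3) := by ring
        rw [this]; exact hx
      rcases hTA x x (x ^ (m+1)) h3 with h | h | h
      · simpa [sq] using h
      · have : x ^ (m+2) ∈ I := by
          have e : x * x ^ (m+1) = x ^ (m+2) := by ring
          rwa [e] at h
        exact ih (m+2) (by omega) x this
      · have : x ^ (m+2) ∈ I := by
          have e : x * x ^ (m+1) = x ^ (m+2) := by ring
          rwa [e] at h
        exact ih (m+2) (by omega) x this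

lemma sq_mem_of_mem_radical (hTA : IsTwoAbsorbing I) {x : R} (hx : x ∈ I.radical) :
    x ^ 2 ∈ I := by
  obtain ⟨n, hn⟩ := hx
  exact sq_mem_of_pow_mem_s9 hTA n x hn

lemma rad_mul_rad (hTA : IsTwoAbsorbing I) {x y : R}
    (hx : x ∈ I.radical) (hy : y ∈ I.radical) : x * y ∈ I := by
  have hx2 : x ^ 2 ∈ I := sq_mem_of_mem_radical hTA hx
  have hy2 : y ^ 2 ∈ I := sq_mem_of_mem_radical hTA hy
  have hprod : x * y * (x + y) ∈ I := by
    have e : x * y * (x + y) = y * x ^ 2 + x * y ^ 2 := by ring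
    rw [e]; exact I.add_mem (I.mul_mem_left y hx2) (I.mul_mem_left x hy2)
  rcases hTA x y (x + y) hprod with h | h | h
  · exact h
  · have : x * y = x * (x + y) - x ^ 2 := by ring
    rw [this]; exact I.sub_mem h hx2
  · have : x * y = y * (x + y) - y ^ 2 := by ring
    rw [this]; exact I.sub_mem h hy2

lemma radical_twoAbsorbing (hTA : IsTwoAbsorbing I) : IsTwoAbsorbing I.radical := by
  intro a b c habc
  have h2 : a ^ 2 * b ^ 2 * c ^ 2 ∈ I := by
    have : (a * b * c) ^ 2 ∈ I := sq_mem_of_mem_radical hTA habc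
    have e : a ^ 2 * b ^ 2 * c ^ 2 = (a * b * c) ^ 2 := by ring
    rwa [e]
  rcases hTA (a^2) (b^2) (c^2) h2 with h | h | h
  · exact Or.inl ⟨2, by rw [show (a*b)^2 = a^2*b^2 by ring]; exact h⟩
  · exact Or.inr (Or.inl ⟨2, by rw [show (a*c)^2 = a^2*c^2 by ring]; exact h⟩)
  · exact Or.inr (Or.inr ⟨2, by rw [show (b*c)^2 = b^2*c^2 by ring]; exact h⟩)

end Lemmas

section Loc
variable {R : Type*} [CommRing R] (M : Ideal R) [M.IsPrime]

local notation "A" => Localization.AtPrime M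
local notation "f" => algebraMap R (Localization.AtPrime M)

lemma loc_pull {K : Ideal R} {r : R} (h : f r ∈ K.map f) :
    ∃ s : R, s ∉ M ∧ s * r ∈ K := by
  rw [IsLocalization.mem_map_algebraMap_iff M.primeCompl] at h
  obtain ⟨⟨k, s⟩, hx⟩ := h
  have : f (r * (s : R)) = f (k : R) := by
    rw [map_mul]; exact hx
  rw [IsLocalization.eq_iff_exists M.primeCompl] at this
  obtain ⟨c, hc⟩ := this
  refine ⟨(c : R) * (s : R), fun hmem => ?_, ?_⟩
  · rcases ‹M.IsPrime›.mem_or_mem hmem with h | h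
    · exact c.2 h
    · exact s.2 h
  · have : (c : R) * (s : R) * r = (c : R) * (k : R) := by
      rw [← hc]; ring
    rw [this]
    exact K.mul_mem_left _ k.2

lemma loc_cancel {K : Ideal R} {z : A} {s : R} (hs : s ∉ M)
    (h : z * f s ∈ K.map f) : z ∈ K.map f := by
  have hu : IsUnit (f s) := IsLocalization.map_units A (⟨s, hs⟩ : M.primeCompl)
  obtain ⟨v, hv⟩ := hu.exists_right_inv
  have : z = z * f s * v := by rw [mul_assoc, hv, mul_one]
  rw [this]
  exact Ideal.mul_mem_right v _ h

lemma loc_twoAbsorbing {K : Ideal R} (hTA : IsTwoAbsorbing K) :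
    IsTwoAbsorbing (K.map f) := by
  intro a b c habc
  obtain ⟨⟨r1, s1⟩, h1⟩ := IsLocalization.surj M.primeCompl a
  obtain ⟨⟨r2, s2⟩, h2⟩ := IsLocalization.surj M.primeCompl b
  obtain ⟨⟨r3, s3⟩, h3⟩ := IsLocalization.surj M.primeCompl c
  have hm : f (r1 * r2 * r3) ∈ K.map f := by
    have e : f (r1 * r2 * r3) = a * b * c * f ((s1 : R) * s2 * s3) := by
      simp only [map_mul]
      rw [← h1, ← h2, ← h3]; ring
    rw [e]
    exact Ideal.mul_mem_right _ _ habc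
  obtain ⟨u, huM, hu⟩ := loc_pull M hm
  have hu' : u * r1 * r2 * r3 ∈ K := by
    rw [show u * r1 * r2 * r3 = u * (r1 * r2 * r3) by ring]; exact hu
  have key : ∀ {w : A} {t r r' : R}, t ∉ M → w * f t = f (r * r') → r * r' ∈ K →
      w ∈ K.map f := by
    intro w t r r' ht hw hr
    exact loc_cancel M ht (hw ▸ Ideal.mem_map_of_mem _ hr)
  have hs12 : (u * (s1 : R) * s2) ∉ M := fun hm' => by
    rcases ‹M.IsPrime›.mem_or_mem hm' with h | h
    · rcases ‹M.IsPrime›.mem_or_mem h with h' | h'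
      · exact huM h'
      · exact s1.2 h'
    · exact s2.2 h
  have hs13 : (u * (s1 : R) * s3) ∉ M := fun hm' => by
    rcases ‹M.IsPrime›.mem_or_mem hm' with h | h
    · rcases ‹M.IsPrime›.mem_or_mem h with h' | h'
      · exact huM h'
      · exact s1.2 h'
    · exact s3.2 h
  have hs23 : ((s2 : R) * s3) ∉ M := fun hm' => by
    rcases ‹M.IsPrime›.mem_or_mem hm' with h | h
    · exact s2.2 h
    · exact s3.2 h
  rcases hTA (u * r1) r2 r3 hu' with h | h | h
  · refine Or.inl (key hs12 ?_ h)
    simp only [map_mul]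
    rw [← h1, ← h2]; ring
  · refine Or.inr (Or.inl (key hs13 ?_ h))
    simp only [map_mul]
    rw [← h1, ← h3]; ring
  · refine Or.inr (Or.inr (key hs23 ?_ h))
    simp only [map_mul]
    rw [← h2, ← h3]; ring

lemma loc_radical {K : Ideal R} (hKM : K.radical ≤ M) (hKP : K.radical.IsPrime) :
    (K.map f).radical = K.radical.map f := by
  apply le_antisymm
  · intro z hz
    obtain ⟨n, hn⟩ := hz
    obtain ⟨⟨r, s⟩, hrs⟩ := IsLocalization.surj M.primeCompl z
    have hrn : f (r ^ n) ∈ K.map f := by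
      have e : f (r ^ n) = z ^ n * f ((s : R) ^ n) := by
        rw [map_pow, map_pow, ← hrs, mul_pow]
      rw [e]
      exact Ideal.mul_mem_right _ _ hn
    obtain ⟨u, huM, hu⟩ := loc_pull M hrn
    have hur : u * r ^ n ∈ K.radical := Ideal.le_radical hu
    have hr : r ∈ K.radical := by
      rcases hKP.mem_or_mem hur with h | h
      · exact absurd (hKM h) huM
      · exact hKP.mem_of_pow_mem n h
    exact loc_cancel M s.2 (hrs ▸ Ideal.mem_map_of_mem _ hr)
  · rw [Ideal.map_le_iff_le_comap]
    intro p hp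
    obtain ⟨n, hn⟩ := hp
    refine ⟨n, ?_⟩
    rw [← map_pow]
    exact Ideal.mem_map_of_mem _ hn

end Loc

section Chain
variable {C : Type*} [CommRing C]

lemma chain_dichotomy {K : Ideal C} (htot : ∀ I J : Ideal C, I ≤ J ∨ J ≤ I)
    (hK : IsTwoAbsorbing K) : K = K.radical ∨ K = K.radical * K.radical := by
  by_cases h : K = K.radical
  · exact Or.inl h
  right
  have hlt : K < K.radical := lt_of_le_of_ne Ideal.le_radical h
  obtain ⟨x, hxr, hxK⟩ := SetLike.exists_of_lt hlt
  apply le_antisymm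
  · intro y hy
    rcases htot (Ideal.span {x}) (Ideal.span {y}) with hle | hle
    · obtain ⟨r, hr⟩ := Ideal.mem_span_singleton'.mp
        (hle (Ideal.mem_span_singleton_self x))
      exact absurd (hr ▸ K.mul_mem_left r hy) hxK
    · obtain ⟨r, hr⟩ := Ideal.mem_span_singleton'.mp
        (hle (Ideal.mem_span_singleton_self y))
      rcases htot (Ideal.span {r}) (Ideal.span {x}) with hle2 | hle2
      · obtain ⟨s, hs⟩ := Ideal.mem_span_singleton'.mp
          (hle2 (Ideal.mem_span_singleton_self r))
        have : y = (s * x) * x := by rw [hs, hr]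
        rw [this]
        exact Ideal.mul_mem_mul (K.radical.mul_mem_left s hxr) hxr
      · obtain ⟨s, hs⟩ := Ideal.mem_span_singleton'.mp
          (hle2 (Ideal.mem_span_singleton_self x))
        have hry : r * r * s ∈ K := by
          rw [show r * r * s = r * (s * r) by ring, hs, hr]; exact hy
        rcases hK r r s hry with h2 | h2 | h2
        · have hrrad : r ∈ K.radical := ⟨2, by rwa [sq]⟩
          rw [← hr]
          exact Ideal.mul_mem_mul hrrad hxr
        · exact absurd (by rwa [show r * s = s * r by ring, hs] at h2) hxK
        · exact absurd (by rwa [show r * s = s * r by ring, hs] at h2) hxK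
  · exact Ideal.mul_le.mpr fun r hr s hs => rad_mul_rad hK hr hs

lemma chain_primary {K : Ideal C} (htot : ∀ I J : Ideal C, I ≤ J ∨ J ≤ I)
    (hK : IsTwoAbsorbing K) (hp : K.radical.IsPrime) :
    ∀ a b : C, a * b ∈ K → a ∉ K.radical → b ∈ K := by
  intro a b hab ha
  rcases chain_dichotomy htot hK with hd | hd
  · have hK' : K.IsPrime := by rw [hd]; exact hp
    rcases hK'.mem_or_mem hab with h | h
    · exact absurd (Ideal.le_radical h) ha
    · exact h
  · rcases htot (Ideal.span {a}) (Ideal.span {b}) with hle | hle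
    · obtain ⟨c, hc⟩ := Ideal.mem_span_singleton'.mp
        (hle (Ideal.mem_span_singleton_self a))
      have hbrad : b ∈ K.radical := by
        rcases hp.mem_or_mem (Ideal.le_radical hab) with h | h
        · exact absurd h ha
        · exact h
      exact absurd (hc ▸ K.radical.mul_mem_left c hbrad) ha
    · obtain ⟨c, hc⟩ := Ideal.mem_span_singleton'.mp
        (hle (Ideal.mem_span_singleton_self b))
      have hcaa : c * a * a ∈ K := by
        rw [show c * a * a = a * (c * a) by ring, hc]; exact hab
      rcases hK c a a hcaa with h | h | h
      · rwa [← hc]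
      · rwa [← hc]
      · exact absurd ⟨2, by rwa [sq]⟩ ha

end Chain

section CaseB
variable {R : Type*} [CommRing R]

lemma colon_prime {J : Ideal R} (hJTA : IsTwoAbsorbing J)
    (hsq : ∀ z : R, z * z ∈ J → z ∈ J) {x y : R}
    (hxy : x * y ∈ J) (hx : x ∉ J) (hy : y ∉ J) :
    (J.colon (Ideal.span {y})).IsPrime := by
  rw [Ideal.isPrime_iff]
  constructor
  · intro htop
    have h1 : (1 : R) ∈ J.colon (Ideal.span {y}) := htop ▸ Submodule.mem_top
    exact hy (by simpa using Ideal.mem_colon_span_singleton.mp h1)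
  · intro u v huv
    by_contra hcon
    push_neg at hcon
    obtain ⟨hu, hv⟩ := hcon
    rw [Ideal.mem_colon_span_singleton] at hu hv huv
    -- huv : u * v * y ∈ J, hu : u * y ∉ J, hv : v * y ∉ J
    have huvJ : u * v ∈ J := by
      rcases hJTA u v y huv with h | h | h
      · exact h
      · exact absurd h hu
      · exact absurd h hv
    have hxv : x * v ∈ J := by
      have h1 : y * (u + x) * v ∈ J := by
        rw [show y * (u + x) * v = u * v * y + x * y * v by ring]
        exact J.add_mem huv (Ideal.mul_mem_right v J hxy)
      rcases hJTA y (u + x) v h1 with h | h | h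
      · have huy : u * y ∈ J := by
          rw [show u * y = y * (u + x) - x * y by ring]
          exact J.sub_mem h hxy
        exact absurd huy hu
      · exact absurd (by rwa [mul_comm] at h) hv
      · rw [show x * v = (u + x) * v - u * v by ring]
        exact J.sub_mem h huvJ
    have hxu : x * u ∈ J := by
      have h1 : y * u * (v + x) ∈ J := by
        rw [show y * u * (v + x) = u * v * y + x * y * u by ring]
        exact J.add_mem huv (Ideal.mul_mem_right u J hxy)
      rcases hJTA y u (v + x) h1 with h | h | h
      · exact absurd (by rwa [mul_comm] at h) hu
      · have hvy : v * y ∈ J := by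
          rw [show v * y = y * (v + x) - x * y by ring]
          exact J.sub_mem h hxy
        exact absurd hvy hv
      · rw [show x * u = u * (v + x) - u * v by ring]
        exact J.sub_mem h huvJ
    have h3 : y * (u + x) * (v + x) ∈ J := by
      rw [show y * (u + x) * (v + x)
          = u * v * y + x * y * u + x * y * v + x * y * x by ring]
      exact J.add_mem (J.add_mem (J.add_mem huv (Ideal.mul_mem_right u J hxy))
        (Ideal.mul_mem_right v J hxy)) (Ideal.mul_mem_right x J hxy)
    rcases hJTA y (u + x) (v + x) h3 with h | h | h
    · have huy : u * y ∈ J := by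
        rw [show u * y = y * (u + x) - x * y by ring]
        exact J.sub_mem h hxy
      exact absurd huy hu
    · have hvy : v * y ∈ J := by
        rw [show v * y = y * (v + x) - x * y by ring]
        exact J.sub_mem h hxy
      exact absurd hvy hv
    · refine hx (hsq x ?_)
      rw [show x * x = (u + x) * (v + x) - u * v - x * u - x * v by ring]
      exact J.sub_mem (J.sub_mem (J.sub_mem h huvJ) hxu) hxv

lemma colon_inter {J : Ideal R} (hJTA : IsTwoAbsorbing J)
    (hsq : ∀ z : R, z * z ∈ J → z ∈ J) {x y : R}
    (hxy : x * y ∈ J) (hx : x ∉ J) (hy : y ∉ J) :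
    ∀ z : R, z * x ∈ J → z * y ∈ J → z ∈ J := by
  intro z hzx hzy
  have hprod : (z + x) * (z + y) * (x + y) ∈ J := by
    rw [show (z + x) * (z + y) * (x + y)
        = z * x * (z + x + 2 * y) + z * y * (z + y) + x * y * (x + y) by ring]
    exact J.add_mem (J.add_mem (Ideal.mul_mem_right _ J hzx)
      (Ideal.mul_mem_right _ J hzy)) (Ideal.mul_mem_right _ J hxy)
  rcases hJTA (z + x) (z + y) (x + y) hprod with h | h | h
  · refine hsq z ?_
    rw [show z * z = (z + x) * (z + y) - z * x - z * y - x * y by ring]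
    exact J.sub_mem (J.sub_mem (J.sub_mem h hzx) hzy) hxy
  · have hxx : x * x ∈ J := by
      rw [show x * x = (z + x) * (x + y) - z * x - z * y - x * y by ring]
      exact J.sub_mem (J.sub_mem (J.sub_mem h hzx) hzy) hxy
    exact absurd (hsq x hxx) hx
  · have hyy : y * y ∈ J := by
      rw [show y * y = (z + y) * (x + y) - z * x - z * y - x * y by ring]
      exact J.sub_mem (J.sub_mem (J.sub_mem h hzx) hzy) hxy
    exact absurd (hsq y hyy) hy

end CaseB

section Loc2
variable {R : Type*} [CommRing R] (M : Ideal R) [M.IsPrime]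

local notation "f" => algebraMap R (Localization.AtPrime M)

lemma loc_map_prime {P : Ideal R} (hP : P.IsPrime) (hPM : P ≤ M) :
    (P.map f).IsPrime := by
  rw [Ideal.isPrime_iff]
  constructor
  · intro htop
    have h1 : f 1 ∈ P.map f := htop ▸ Submodule.mem_top
    obtain ⟨u, huM, hu⟩ := loc_pull M h1
    rw [mul_one] at hu
    exact huM (hPM hu)
  · intro z w hzw
    obtain ⟨⟨r, s⟩, hr⟩ := IsLocalization.surj M.primeCompl z
    obtain ⟨⟨r', s'⟩, hr'⟩ := IsLocalization.surj M.primeCompl w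
    have hmem : f (r * r') ∈ P.map f := by
      have e : f (r * r') = z * w * f ((s : R) * (s' : R)) := by
        simp only [map_mul]
        rw [← hr, ← hr']; ring
      rw [e]
      exact Ideal.mul_mem_right _ _ hzw
    obtain ⟨u, huM, hu⟩ := loc_pull M hmem
    have hrr : r * r' ∈ P := by
      rcases hP.mem_or_mem hu with h | h
      · exact absurd (hPM h) huM
      · exact h
    rcases hP.mem_or_mem hrr with h | h
    · exact Or.inl (loc_cancel M s.2 (hr ▸ Ideal.mem_map_of_mem _ h))
    · exact Or.inr (loc_cancel M s'.2 (hr' ▸ Ideal.mem_map_of_mem _ h))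

end Loc2

theorem twoAbsorbing_in_arithmetical_ring {R : Type*} [CommRing R]
    (harith : ∀ (M : Ideal R) [M.IsMaximal],
      ∀ I J : Ideal (Localization.AtPrime M), I ≤ J ∨ J ≤ I)
    (I : Ideal R) (hI : I ≠ ⊤) (hTA : IsTwoAbsorbing I) :
    I.IsPrime ∨ ∃ P Q : Ideal R, P.IsPrime ∧ Q.IsPrime ∧ I = P * Q := by
  classical
  by_cases hJp : I.radical.IsPrime
  · by_cases hIJ : I = I.radical
    · exact Or.inl (hIJ ▸ hJp)
    · right
      have hlt : I < I.radical := lt_of_le_of_ne Ideal.le_radical hIJ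
      obtain ⟨a, haJ, haI⟩ := SetLike.exists_of_lt hlt
      have GP : ∀ u b : R, u * b ∈ I → u ∉ I.radical → b ∈ I := by
        intro u b hub hu
        have hcol : I.colon (Ideal.span {b}) = ⊤ := by
          by_contra hne
          obtain ⟨M, hM, hle⟩ := Ideal.exists_le_maximal _ hne
          haveI := hM
          haveI hMp : M.IsPrime := hM.isPrime
          by_cases hJM : I.radical ≤ M
          · have htot := harith M
            have habs := loc_twoAbsorbing M (K := I) hTA
            have hradeq := loc_radical M (K := I) hJM hJp
            have hmapJp := loc_map_prime M hJp hJM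
            have hfu : algebraMap R (Localization.AtPrime M) u ∉
                (Ideal.map (algebraMap R (Localization.AtPrime M)) I).radical := by
              rw [hradeq]
              intro hmem
              obtain ⟨v, hvM, hv⟩ := loc_pull M hmem
              rcases hJp.mem_or_mem hv with h | h
              · exact hvM (hJM h)
              · exact hu h
            have hfb : algebraMap R (Localization.AtPrime M) b ∈
                Ideal.map (algebraMap R (Localization.AtPrime M)) I := by
              refine chain_primary htot habs ?_ _ _ ?_ hfu
              · rw [hradeq]; exact hmapJp
              · rw [← map_mul]; exact Ideal.mem_map_of_mem _ hub
            obtain ⟨s, hsM, hsb⟩ := loc_pull M hfb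
            exact hsM (hle (Ideal.mem_colon_span_singleton.mpr hsb))
          · obtain ⟨p, hpJ, hpM⟩ := SetLike.not_le_iff_exists.mp hJM
            obtain ⟨n, hpn⟩ := hpJ
            have hmem : p ^ n ∈ I.colon (Ideal.span {b}) :=
              Ideal.mem_colon_span_singleton.mpr (Ideal.mul_mem_right b I hpn)
            exact hpM (hMp.mem_of_pow_mem n (hle hmem))
        have h1 : (1 : R) ∈ I.colon (Ideal.span {b}) := hcol ▸ Submodule.mem_top
        simpa using Ideal.mem_colon_span_singleton.mp h1
      refine ⟨I.radical, I.radical, hJp, hJp, ?_⟩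
      apply le_antisymm
      · intro b hb
        have hcol : (I.radical * I.radical).colon (Ideal.span {b}) = ⊤ := by
          by_contra hne
          obtain ⟨M, hM, hle⟩ := Ideal.exists_le_maximal _ hne
          haveI := hM
          haveI hMp : M.IsPrime := hM.isPrime
          by_cases hJM : I.radical ≤ M
          · have htot := harith M
            have habs := loc_twoAbsorbing M (K := I) hTA
            have hradeq := loc_radical M (K := I) hJM hJp
            rcases chain_dichotomy htot habs with hd | hd
            · exfalso
              have hfa : algebraMap R (Localization.AtPrime M) a ∈
                  Ideal.map (algebraMap R (Localization.AtPrime M)) I := by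
                rw [hd, hradeq]; exact Ideal.mem_map_of_mem _ haJ
              obtain ⟨u, huM, hu⟩ := loc_pull M hfa
              exact haI (GP u a hu fun huJ => huM (hJM huJ))
            · have hfb : algebraMap R (Localization.AtPrime M) b ∈
                  Ideal.map (algebraMap R (Localization.AtPrime M))
                    (I.radical * I.radical) := by
                rw [Ideal.map_mul, ← hradeq, ← hd]
                exact Ideal.mem_map_of_mem _ hb
              obtain ⟨s, hsM, hsb⟩ := loc_pull M hfb
              exact hsM (hle (Ideal.mem_colon_span_singleton.mpr hsb))
          · obtain ⟨p, hpJ, hpM⟩ := SetLike.not_le_iff_exists.mp hJM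
            have hmem : p * p ∈ (I.radical * I.radical).colon (Ideal.span {b}) :=
              Ideal.mem_colon_span_singleton.mpr
                (Ideal.mul_mem_right b _ (Ideal.mul_mem_mul hpJ hpJ))
            rcases hMp.mem_or_mem (hle hmem) with h | h <;> exact hpM h
        have h1 : (1 : R) ∈ (I.radical * I.radical).colon (Ideal.span {b}) :=
          hcol ▸ Submodule.mem_top
        simpa using Ideal.mem_colon_span_singleton.mp h1
      · exact Ideal.mul_le.mpr fun r hr s hs => rad_mul_rad hTA hr hs
  · -- Case B : the radical is not prime
    right
    have hJtop : I.radical ≠ ⊤ := fun h => hI (Ideal.radical_eq_top.mp h)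
    have hJTA : IsTwoAbsorbing I.radical := radical_twoAbsorbing hTA
    have hsq : ∀ z : R, z * z ∈ I.radical → z ∈ I.radical := by
      intro z hz
      obtain ⟨n, hn⟩ := hz
      refine ⟨2 * n, ?_⟩
      rw [pow_mul, pow_two]
      exact hn
    obtain ⟨x, y, hxy, hx, hy⟩ :
        ∃ x y : R, x * y ∈ I.radical ∧ x ∉ I.radical ∧ y ∉ I.radical := by
      by_contra hc
      push_neg at hc
      refine hJp (Ideal.isPrime_iff.mpr ⟨hJtop, fun {u v} huv => ?_⟩)
      by_cases hu : u ∈ I.radical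
      · exact Or.inl hu
      · exact Or.inr (hc u v huv hu)
    set P := (I.radical).colon (Ideal.span {y}) with hPdef
    set Q := (I.radical).colon (Ideal.span {x}) with hQdef
    have hP : P.IsPrime := colon_prime hJTA hsq hxy hx hy
    have hQ : Q.IsPrime := colon_prime hJTA hsq (by rwa [mul_comm] at hxy) hy hx
    have hxP : x ∈ P := Ideal.mem_colon_span_singleton.mpr hxy
    have hyQ : y ∈ Q := Ideal.mem_colon_span_singleton.mpr (by rwa [mul_comm] at hxy)
    have hxQ : x ∉ Q := fun h => hx (hsq x (Ideal.mem_colon_span_singleton.mp h))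
    have hyP : y ∉ P := fun h => hy (hsq y (Ideal.mem_colon_span_singleton.mp h))
    have hJP : I.radical ≤ P := fun z hz =>
      Ideal.mem_colon_span_singleton.mpr (Ideal.mul_mem_right y _ hz)
    have hJQ : I.radical ≤ Q := fun z hz =>
      Ideal.mem_colon_span_singleton.mpr (Ideal.mul_mem_right x _ hz)
    have hinterJ : ∀ z : R, z ∈ P → z ∈ Q → z ∈ I.radical := by
      intro z hzP hzQ
      exact colon_inter hJTA hsq hxy hx hy z
        (Ideal.mem_colon_span_singleton.mp hzQ) (Ideal.mem_colon_span_singleton.mp hzP)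
    have hsup : P ⊔ Q = ⊤ := by
      by_contra hne
      obtain ⟨M, hM, hle⟩ := Ideal.exists_le_maximal _ hne
      haveI := hM
      haveI hMp : M.IsPrime := hM.isPrime
      have hPM : P ≤ M := le_trans le_sup_left hle
      have hQM : Q ≤ M := le_trans le_sup_right hle
      rcases harith M (P.map (algebraMap R (Localization.AtPrime M)))
          (Q.map (algebraMap R (Localization.AtPrime M))) with hle2 | hle2
      · refine hxQ ?_
        have hm : algebraMap R (Localization.AtPrime M) x ∈
            Q.map (algebraMap R (Localization.AtPrime M)) :=
          hle2 (Ideal.mem_map_of_mem _ hxP)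
        obtain ⟨u, huM, hu⟩ := loc_pull M hm
        rcases hQ.mem_or_mem hu with h | h
        · exact absurd (hQM h) huM
        · exact h
      · refine hyP ?_
        have hm : algebraMap R (Localization.AtPrime M) y ∈
            P.map (algebraMap R (Localization.AtPrime M)) :=
          hle2 (Ideal.mem_map_of_mem _ hyQ)
        obtain ⟨u, huM, hu⟩ := loc_pull M hm
        rcases hP.mem_or_mem hu with h | h
        · exact absurd (hPM h) huM
        · exact h
    have hmul : P * Q = P ⊓ Q := Ideal.mul_eq_inf_of_coprime hsup
    have hcore : ∀ p, p ∈ P → p ∉ Q → ∀ q, q ∈ Q → q ∉ P → p * q ∈ I := by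
      intro p hp hpQ q hq hqP
      have hpqJ : p * q ∈ I.radical :=
        hinterJ _ (Ideal.mul_mem_right q _ hp) (Ideal.mul_mem_left _ p hq)
      have hprod : p * q * (p * q) ∈ I := by
        rw [show p * q * (p * q) = (p * q) ^ 2 by ring]
        exact sq_mem_of_mem_radical hTA hpqJ
      rcases hTA p q (p * q) hprod with h | h | h
      · exact h
      · have h2 : p * p * q ∈ I := by rwa [show p * p * q = p * (p * q) by ring]
        rcases hTA p p q h2 with h3 | h3 | h3
        · exact absurd (hJQ ⟨2, by rwa [pow_two]⟩) hpQ
        · exact h3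
        · exact h3
      · have h2 : q * q * p ∈ I := by rwa [show q * q * p = q * (p * q) by ring]
        rcases hTA q q p h2 with h3 | h3 | h3
        · exact absurd (hJP ⟨2, by rwa [pow_two]⟩) hqP
        · rwa [mul_comm] at h3
        · rwa [mul_comm] at h3
    have hPQI : P * Q ≤ I := by
      refine Ideal.mul_le.mpr fun p hp q hq => ?_
      have hpx : p ∈ Q → (p + x) ∉ Q := fun hpQ h =>
        hxQ (by simpa using Q.sub_mem h hpQ)
      have hqy : q ∈ P → (q + y) ∉ P := fun hqP h =>
        hyP (by simpa using P.sub_mem h hqP)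
      by_cases hpQ : p ∈ Q
      · by_cases hqP : q ∈ P
        · have h1 := hcore (p + x) (P.add_mem hp hxP) (hpx hpQ)
            (q + y) (Q.add_mem hq hyQ) (hqy hqP)
          have h2 := hcore (p + x) (P.add_mem hp hxP) (hpx hpQ) y hyQ hyP
          have h3 := hcore x hxP hxQ (q + y) (Q.add_mem hq hyQ) (hqy hqP)
          have h4 := hcore x hxP hxQ y hyQ hyP
          rw [show p * q = (p + x) * (q + y) - (p + x) * y - x * (q + y) + x * y
            by ring]
          exact I.add_mem (I.sub_mem (I.sub_mem h1 h2) h3) h4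
        · have h1 := hcore (p + x) (P.add_mem hp hxP) (hpx hpQ) q hq hqP
          have h2 := hcore x hxP hxQ q hq hqP
          rw [show p * q = (p + x) * q - x * q by ring]
          exact I.sub_mem h1 h2
      · by_cases hqP : q ∈ P
        · have h1 := hcore p hp hpQ (q + y) (Q.add_mem hq hyQ) (hqy hqP)
          have h2 := hcore p hp hpQ y hyQ hyP
          rw [show p * q = p * (q + y) - p * y by ring]
          exact I.sub_mem h1 h2
        · exact hcore p hp hpQ q hq hqP
    refine ⟨P, Q, hP, hQ, le_antisymm ?_ hPQI⟩
    rw [hmul]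
    exact le_inf (le_trans Ideal.le_radical hJP) (le_trans Ideal.le_radical hJQ)
end

section
/- If D is a TAF-domain with trivial Picard group (every invertible ideal is principal) and x ∈ D is an irreducible element (atom), then the principal ideal xD is a 2-absorbing ideal. -/
open scoped nonZeroDivisors

theorem Irreducible.card_eq_one_of_prod {M ι : Type*} [CommMonoid M] {s : Finset ι} {f : ι → M}
    (h : Irreducible (∏ i ∈ s, f i)) (hf : ∀ i ∈ s, ¬IsUnit (f i)) : s.card = 1 := by
  classical
  obtain ⟨i, hi⟩ : s.Nonempty := by
    by_contra hs
    rw [Finset.not_nonempty_iff_eq_empty.mp hs, Finset.prod_empty] at h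
    exact h.not_isUnit isUnit_one
  rw [← Finset.mul_prod_erase s f hi] at h
  obtain hfi | hrest := h.isUnit_or_isUnit rfl
  · exact absurd hfi (hf i hi)
  · have hempty : s.erase i = ∅ := Finset.eq_empty_of_forall_notMem fun j hj =>
      hf j (Finset.mem_of_mem_erase hj) (IsUnit.prod_iff.mp hrest j hj)
    rw [← Finset.card_erase_add_one hi, hempty, Finset.card_empty, zero_add]

section FractionField

variable {R K : Type*} [CommRing R] [IsDomain R] [Field K] [Algebra R K] [IsFractionRing R K]

theorem ClassGroup.subsingleton_of_forall_isUnit_eq_spanSingleton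
    (h : ∀ I : FractionalIdeal R⁰ K, IsUnit I → ∃ x : K, I = FractionalIdeal.spanSingleton R⁰ x) :
    Subsingleton (ClassGroup R) :=
  subsingleton_of_forall_eq 1 <| ClassGroup.induction K fun I =>
    ClassGroup.mk_eq_one_iff.mpr <| (FractionalIdeal.isPrincipal_iff _).mpr (h _ I.isUnit)

theorem FractionalIdeal.isUnit_coeIdeal_span_singleton {x : R} (hx : x ≠ 0) :
    IsUnit ((Ideal.span {x} : Ideal R) : FractionalIdeal R⁰ K) := by
  have hxK : algebraMap R K x ≠ 0 := IsFractionRing.to_map_ne_zero_of_mem_nonZeroDivisors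
    (mem_nonZeroDivisors_of_ne_zero hx)
  rw [coeIdeal_span_singleton, ← mul_inv_cancel_iff_isUnit, spanSingleton_inv,
    spanSingleton_mul_spanSingleton, mul_inv_cancel₀ hxK, spanSingleton_one]

end FractionField

theorem atom_generates_TA_ideal {D : Type*} [CommRing D] [IsDomain D]
    (h : IsTAFRing D)
    (hpic : ∀ I : FractionalIdeal (nonZeroDivisors D) (FractionRing D), IsUnit I →
      ∃ x : FractionRing D, I = FractionalIdeal.spanSingleton (nonZeroDivisors D) x)
    (x : D) (hx : Irreducible x) : IsTwoAbsorbing (Ideal.span {x}) := by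
  have := ClassGroup.subsingleton_of_forall_isUnit_eq_spanSingleton hpic
  have hxtop : Ideal.span {x} ≠ ⊤ := fun htop =>
    hx.not_isUnit (Ideal.span_singleton_eq_top.mp htop)
  obtain ⟨n, J, hJ, hxJ⟩ := h _ hxtop
  have hJunit : ∀ i, IsUnit (J i : FractionalIdeal D⁰ (FractionRing D)) := by
    have hxunit := FractionalIdeal.isUnit_coeIdeal_span_singleton (K := FractionRing D) hx.ne_zero
    have hcoe : ((∏ i, J i : Ideal D) : FractionalIdeal D⁰ (FractionRing D)) =
        ∏ i, (J i : FractionalIdeal D⁰ (FractionRing D)) :=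
      map_prod (FractionalIdeal.coeIdealHom D⁰ (FractionRing D)) J _
    rwa [hxJ, hcoe, IsUnit.prod_univ_iff] at hxunit
  choose a ha using fun i => (ClassGroup.isPrincipal_of_isUnit_coeIdeal _ (hJunit i)).principal
  have hxa : Associated x (∏ i, a i) := by
    rw [← Ideal.span_singleton_eq_span_singleton, hxJ, ← Ideal.prod_span_singleton]
    exact Finset.prod_congr rfl fun i _ => ha i
  have hn : n = 1 := by
    simpa using (hxa.irreducible hx).card_eq_one_of_prod fun i _ hai =>
      (hJ i).1 ((ha i).trans (Ideal.span_singleton_eq_top.mpr hai))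
  subst hn
  simpa [hxJ] using (hJ 0).2
end

section
/- Let (D, M) be a local one-dimensional domain such that every proper principal ideal of D has a factorization into 2-absorbing ideals. Then D is atomic (every nonzero nonunit is a finite product of irreducible elements). -/
/-!
Each 2-absorbing factor `J` of a nonzero proper principal ideal `xD` divides `xD`, hence is
invertible and so principal, `J = yD`, in the local ring `D`. Since `D` is one-dimensional, the
maximal ideal `M` is the radical of `yD`, and a 2-absorbing ideal contains the product of its
radical with itself, so `M² ⊆ yD`. Either `y ∉ M²`, and then `y` is an atom, or `yD = M²`, and
then `M` is principal with an atom `m` as generator and `y` is associated to `m²`.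
-/

open Ideal IsLocalRing

theorem IsLocalRing.isPrincipal_of_mul_eq_span_singleton {D : Type*} [CommRing D] [IsDomain D]
    [IsLocalRing D] {I K : Ideal D} {x : D} (hx : x ≠ 0) (h : I * K = span {x}) :
    I.IsPrincipal := by
  -- The coefficients `c` generate the unit ideal, so one of them is a unit, and the
  -- corresponding `a₀` then generates `I`.
  let S : Set D := {c | ∃ a ∈ I, ∃ b ∈ K, a * b = c * x}
  have hS : span S = ⊤ := by
    have hle : I * K ≤ span S * span {x} := mul_le.mpr fun a ha b hb => by
      have hab : a * b ∈ span {x} := h ▸ mul_mem_mul ha hb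
      obtain ⟨c, hc⟩ := mem_span_singleton'.mp hab
      exact mem_mul_span_singleton.mpr ⟨c, subset_span ⟨a, ha, b, hb, hc.symm⟩, hc⟩
    rw [h, span_singleton_le_iff_mem] at hle
    obtain ⟨s, hs, hsx⟩ := mem_mul_span_singleton.mp hle
    rwa [eq_top_iff_one, ← (mul_eq_right₀ hx).mp hsx]
  obtain ⟨c, ⟨a₀, ha₀, b₀, hb₀, hab₀⟩, hc⟩ : ∃ c ∈ S, IsUnit c := by
    by_contra! hS'
    exact (maximalIdeal.isMaximal D).ne_top <|
      top_le_iff.mp (hS ▸ span_le.mpr fun c hc => (mem_maximalIdeal c).mpr (hS' c hc))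
  have hb₀_ne : b₀ ≠ 0 := by
    rintro rfl
    exact hx ((mul_eq_zero.mp (by simpa using hab₀.symm)).resolve_left hc.ne_zero)
  refine ⟨a₀, le_antisymm (fun a ha => ?_) ((span_singleton_le_iff_mem _).mpr ha₀)⟩
  have hab : a * b₀ ∈ span {x} := h ▸ mul_mem_mul ha hb₀
  obtain ⟨e, he⟩ := mem_span_singleton'.mp hab
  refine mem_span_singleton'.mpr ⟨↑hc.unit⁻¹ * e, mul_right_cancel₀ hb₀_ne ?_⟩
  calc ↑hc.unit⁻¹ * e * a₀ * b₀ = e * (↑hc.unit⁻¹ * c) * x := by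
        rw [mul_assoc _ a₀, hab₀]; ring
    _ = a * b₀ := by rw [IsUnit.val_inv_mul, mul_one, he]

namespace IsTwoAbsorbing

variable {R : Type*} [CommRing R] {I : Ideal R}

theorem sq_mem_of_pow_mem_s15 (hI : IsTwoAbsorbing I) {a : R} {n : ℕ} (ha : a ^ n ∈ I) :
    a ^ 2 ∈ I := by
  induction n with
  | zero => exact I.mem_of_one_mem (pow_zero a ▸ ha) _
  | succ n ih =>
    rcases n with _ | _ | k
    · exact pow_two a ▸ I.mul_mem_right a (pow_one a ▸ ha)
    · exact ha
    · have : a * a * a ^ (k + 1) ∈ I := by rwa [← pow_two, ← pow_add, add_comm 2]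
      rcases hI _ _ _ this with h | h | h <;> first
        | exact pow_two a ▸ h
        | exact ih (by rwa [pow_succ' a (k + 1)])

theorem sq_mem_of_mem_radical (hI : IsTwoAbsorbing I) {a : R} (ha : a ∈ I.radical) :
    a ^ 2 ∈ I :=
  let ⟨_, hn⟩ := ha
  hI.sq_mem_of_pow_mem_s15 hn

theorem mul_mem_of_sq_mem (hI : IsTwoAbsorbing I) {a b : R} (ha : a ^ 2 ∈ I) (hb : b ^ 2 ∈ I) :
    a * b ∈ I := by
  have hab : a * b * (a + b) ∈ I := by
    rw [show a * b * (a + b) = b * a ^ 2 + a * b ^ 2 by ring]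
    exact I.add_mem (I.mul_mem_left b ha) (I.mul_mem_left a hb)
  rcases hI _ _ _ hab with h | h | h
  · exact h
  · simpa [mul_add, ← pow_two] using I.sub_mem h ha
  · simpa [mul_add, ← pow_two, mul_comm] using I.sub_mem h hb

theorem radical_mul_radical_le (hI : IsTwoAbsorbing I) : I.radical * I.radical ≤ I :=
  mul_le.mpr fun _ ha _ hb =>
    hI.mul_mem_of_sq_mem (hI.sq_mem_of_mem_radical ha) (hI.sq_mem_of_mem_radical hb)

end IsTwoAbsorbing

theorem IsLocalRing.irreducible_of_notMem_maximalIdeal_mul {R : Type*} [CommRing R]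
    [IsLocalRing R] {y : R} (hy : ¬IsUnit y) (hyM : y ∉ maximalIdeal R * maximalIdeal R) :
    Irreducible y := by
  refine ⟨hy, fun a b hab => ?_⟩
  by_contra! h
  exact hyM (hab ▸ mul_mem_mul ((mem_maximalIdeal a).mpr h.1) ((mem_maximalIdeal b).mpr h.2))

theorem exists_irreducible_factors_prod {α ι : Type*} [CommMonoid α] (s : Finset ι) (f : ι → α)
    (h : ∀ i ∈ s, ∃ l : Multiset α, (∀ a ∈ l, Irreducible a) ∧ Associated l.prod (f i)) :
    ∃ l : Multiset α, (∀ a ∈ l, Irreducible a) ∧ Associated l.prod (∏ i ∈ s, f i) :=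
  Finset.prod_induction f
    (fun x => ∃ l : Multiset α, (∀ a ∈ l, Irreducible a) ∧ Associated l.prod x)
    (fun _ _ ⟨la, hla, ha⟩ ⟨lb, hlb, hb⟩ =>
      ⟨la + lb, fun a hab => (Multiset.mem_add.mp hab).elim (hla a) (hlb a),
        Multiset.prod_add la lb ▸ ha.mul_mul hb⟩)
    ⟨0, by simp, by simp⟩ h

section OneDimensional

variable {D : Type*} [CommRing D] [IsDomain D] [IsLocalRing D]

theorem maximalIdeal_mul_le_of_isTwoAbsorbing (hdim : ringKrullDim D = 1) {y : D} (hy : y ≠ 0)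
    (h2 : IsTwoAbsorbing (span {y})) : maximalIdeal D * maximalIdeal D ≤ span {y} := by
  have hM := (ringKrullDim_eq_one_iff_of_isLocalRing_isDomain.mp hdim).2 y hy
  exact (mul_mono hM hM).trans h2.radical_mul_radical_le

theorem exists_irreducible_factors_of_isTwoAbsorbing (hdim : ringKrullDim D = 1) {y : D}
    (hy0 : y ≠ 0) (hy : ¬IsUnit y) (h2 : IsTwoAbsorbing (span {y})) :
    ∃ l : Multiset D, (∀ a ∈ l, Irreducible a) ∧ Associated l.prod y := by
  by_cases hyM : y ∈ maximalIdeal D * maximalIdeal D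
  swap
  · exact ⟨{y}, by simpa using irreducible_of_notMem_maximalIdeal_mul hy hyM, by simp⟩
  have hMy : maximalIdeal D * maximalIdeal D = span {y} :=
    le_antisymm (maximalIdeal_mul_le_of_isTwoAbsorbing hdim hy0 h2)
      ((span_singleton_le_iff_mem _).mpr hyM)
  obtain ⟨m, hm⟩ := isPrincipal_of_mul_eq_span_singleton hy0 hMy
  have hm0 : m ≠ 0 := by
    rintro rfl
    exact hy0 (span_singleton_eq_bot.mp (by simpa [hm] using hMy.symm))
  have hmirr := IsDiscreteValuationRing.irreducible_of_span_eq_maximalIdeal m hm0 hm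
  refine ⟨{m, m}, by simpa using hmirr, ?_⟩
  rw [← span_singleton_eq_span_singleton, ← hMy, hm, submodule_span_eq,
    span_singleton_mul_span_singleton]
  simp

end OneDimensional

theorem atomic_of_principal_TA_factorization {D : Type*} [CommRing D] [IsDomain D]
    [IsLocalRing D] (hdim : ringKrullDim D = 1)
    (hfact : ∀ x : D, x ≠ 0 → ¬IsUnit x → ∃ (n : ℕ) (J : Fin n → Ideal D),
      (∀ i, J i ≠ ⊤ ∧ IsTwoAbsorbing (J i)) ∧ Ideal.span {x} = ∏ i, J i) :
    ∀ x : D, x ≠ 0 → ¬IsUnit x →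
      ∃ l : Multiset D, (∀ a ∈ l, Irreducible a) ∧ Associated l.prod x := by
  intro x hx0 hxu
  obtain ⟨n, J, hJ, hxJ⟩ := hfact x hx0 hxu
  have hprin (i : Fin n) : (J i).IsPrincipal := by
    classical
    refine isPrincipal_of_mul_eq_span_singleton hx0 (K := ∏ j ∈ Finset.univ.erase i, J j) ?_
    rw [Finset.mul_prod_erase _ _ (Finset.mem_univ i), hxJ]
  choose y hy using fun i => (hprin i).principal
  simp only [submodule_span_eq] at hy
  have hyx : Associated (∏ i, y i) x := by
    rw [← span_singleton_eq_span_singleton, ← prod_span_singleton, hxJ]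
    exact Finset.prod_congr rfl fun i _ => (hy i).symm
  have hy0 (i : Fin n) : y i ≠ 0 :=
    Finset.prod_ne_zero_iff.mp (hyx.ne_zero_iff.mpr hx0) i (Finset.mem_univ i)
  have hyu (i : Fin n) : ¬IsUnit (y i) := fun hu =>
    (hJ i).1 (by rw [hy i, span_singleton_eq_top.mpr hu])
  obtain ⟨l, hl, hly⟩ := exists_irreducible_factors_prod Finset.univ y fun i _ =>
    exists_irreducible_factors_of_isTwoAbsorbing hdim (hy0 i) (hyu i) (hy i ▸ (hJ i).2)
  exact ⟨l, hl, hly.trans hyx⟩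
end

section
/- Let (D, M) be a local domain, not a field, such that (M : M) = {x in the quotient field of D : xM ⊆ M} is a discrete valuation ring with maximal ideal M. Then D is a TAF-domain: every proper nonzero ideal of D is a finite product of 2-absorbing ideals. -/
/-!
Since `D ⊆ B = (M : M)` and `M` is the maximal ideal of the DVR `B`, `M = mB` for some `m ∈ M`,
so every element of `m^(j+1) B` is `m^j` times an element of `M`. If `k + 1` is the least
valuation in `B` of an element `i₀ ∈ I`, then `I ⊆ m^(k+1) B = m^k M`, whence
`I = (m)^k (I : m^k)`. Both factors are proper and contain `M²` (`M² ⊆ mM` and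
`m^k M² ⊆ i₀ M ⊆ I`), and in a local ring every ideal containing `M²` is 2-absorbing.
-/

open IsLocalRing

theorem isTwoAbsorbing_of_maximalIdeal_sq_le {R : Type*} [CommRing R] [IsLocalRing R]
    {I : Ideal R} (h : maximalIdeal R ^ 2 ≤ I) : IsTwoAbsorbing I := by
  intro a b c habc
  by_cases ha : IsUnit a
  · exact .inr <| .inr <| (I.unit_mul_mem_iff_mem ha).mp (by rwa [← mul_assoc])
  by_cases hb : IsUnit b
  · exact .inr <| .inl <| (I.unit_mul_mem_iff_mem hb).mp (by rwa [mul_left_comm, ← mul_assoc])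
  exact .inl <| h <| sq (maximalIdeal R) ▸ Ideal.mul_mem_mul ha hb

theorem ValuationRing.exists_mem_forall_dvd {R : Type*} [CommMonoidWithZero R]
    [PreValuationRing R] [WfDvdMonoid R] {S : Set R} (hS : S.Nonempty) :
    ∃ s ∈ S, ∀ t ∈ S, s ∣ t := by
  obtain ⟨s, hs, hmin⟩ := wellFounded_dvdNotUnit.has_min S hS
  refine ⟨s, hs, fun t ht => ?_⟩
  by_contra hst
  rcases ValuationRing.dvd_total s t with h | h
  · exact hst h
  · exact hmin t ht (dvdNotUnit_of_dvd_of_not_dvd h hst)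

section

variable {D B : Type*} [CommRing D] [IsLocalRing D]

theorem map_mem_maximalIdeal [CommRing B] [IsLocalRing B] {g : D →+* B}
    (hM : g '' maximalIdeal D = maximalIdeal B) {a : D} (ha : a ∈ maximalIdeal D) :
    g a ∈ maximalIdeal B :=
  (hM ▸ Set.mem_image_of_mem g ha : g a ∈ (maximalIdeal B : Set B))

theorem exists_mem_maximalIdeal_eq_mul [CommRing B] [IsLocalRing B] {g : D →+* B}
    (hg : Function.Injective g) (hM : g '' maximalIdeal D = maximalIdeal B)
    {x y : D} {b : B} (hb : b ∈ maximalIdeal B) (h : g y = g x * b) :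
    ∃ a ∈ maximalIdeal D, y = x * a := by
  obtain ⟨a, ha, rfl⟩ : b ∈ g '' maximalIdeal D := hM ▸ hb
  exact ⟨a, ha, hg (by rw [h, map_mul])⟩

variable [CommRing B] [IsDomain B] [IsDiscreteValuationRing B] {g : D →+* B}
  (hg : Function.Injective g) (hM : g '' maximalIdeal D = maximalIdeal B)
  {m : D} (hm : Irreducible (g m))
include hg hM hm

theorem maximalIdeal_sq_le_span_singleton : maximalIdeal D ^ 2 ≤ Ideal.span {m} := by
  rw [sq, Ideal.mul_le]
  intro a ha b hb
  obtain ⟨c, hc⟩ :=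
    Ideal.mem_span_singleton.mp (hm.maximalIdeal_eq ▸ map_mem_maximalIdeal hM ha)
  obtain ⟨a', -, hab⟩ := exists_mem_maximalIdeal_eq_mul hg hM
    (Ideal.mul_mem_left _ c (map_mem_maximalIdeal hM hb))
    (by rw [map_mul, hc, mul_assoc] : g (a * b) = g m * (c * g b))
  exact hab ▸ Ideal.mul_mem_right _ _ (Ideal.mem_span_singleton_self m)

theorem exists_mem_associated_pow_forall_dvd {I : Ideal D} (hI0 : I ≠ ⊥) (hIT : I ≠ ⊤) :
    ∃ i₀ ∈ I, ∃ k : ℕ, Associated (g i₀) (g m ^ (k + 1)) ∧ ∀ i ∈ I, g i₀ ∣ g i := by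
  obtain ⟨i₀, hi₀, hdvd⟩ : ∃ i₀ ∈ I, ∀ i ∈ I, g i₀ ∣ g i := by
    obtain ⟨_, ⟨i₀, hi₀, rfl⟩, h⟩ :=
      ValuationRing.exists_mem_forall_dvd ((Set.nonempty_of_mem I.zero_mem).image g)
    exact ⟨i₀, hi₀, fun i hi => h _ ⟨i, hi, rfl⟩⟩
  have hi₀0 : g i₀ ≠ 0 := by
    obtain ⟨i, hi, hi0⟩ := Submodule.exists_mem_ne_zero_of_ne_bot hI0
    exact fun h => (map_ne_zero_iff g hg).mpr hi0 (zero_dvd_iff.mp (h ▸ hdvd i hi))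
  obtain ⟨n, hn⟩ := IsDiscreteValuationRing.associated_pow_irreducible hi₀0 hm
  obtain ⟨k, rfl⟩ : ∃ k, n = k + 1 := Nat.exists_eq_succ_of_ne_zero <| by
    rintro rfl
    exact map_mem_maximalIdeal hM (le_maximalIdeal hIT hi₀)
      (associated_one_iff_isUnit.mp (pow_zero (g m) ▸ hn))
  exact ⟨i₀, hi₀, k, hn, hdvd⟩

theorem exists_eq_span_singleton_pow_mul {I : Ideal D} (hI0 : I ≠ ⊥) (hIT : I ≠ ⊤) :
    ∃ (k : ℕ) (J : Ideal D), J ≠ ⊤ ∧ maximalIdeal D ^ 2 ≤ J ∧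
      I = Ideal.span {m} ^ k * J := by
  obtain ⟨i₀, hi₀, k, hassoc, hdvd⟩ := exists_mem_associated_pow_forall_dvd hg hM hm hI0 hIT
  have hmk : m ^ k ∉ I := fun h => by
    have := hassoc.dvd_iff_dvd_left.mp (map_pow g m k ▸ hdvd _ h)
    exact absurd ((pow_dvd_pow_iff hm.ne_zero hm.not_isUnit).mp this) (by omega)
  obtain ⟨u, hu⟩ := hassoc
  have hu' : g i₀ = g m ^ (k + 1) * ↑u⁻¹ := by rw [← hu, Units.mul_inv_cancel_right]
  have hsq : maximalIdeal D ^ 2 ≤ I.colon {m ^ k} := by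
    rw [sq, Ideal.mul_le]
    intro a ha b hb
    obtain ⟨c, hc⟩ :=
      Ideal.mem_span_singleton.mp (hm.maximalIdeal_eq ▸ map_mem_maximalIdeal hM ha)
    obtain ⟨a', -, hab⟩ :=
      exists_mem_maximalIdeal_eq_mul hg hM (x := i₀) (y := a * b * m ^ k)
      (Ideal.mul_mem_left _ (u * c) (map_mem_maximalIdeal hM hb))
      (by simp only [map_mul, map_pow, hc]; linear_combination -(c * g b) * hu)
    rw [Submodule.mem_colon_singleton, smul_eq_mul, hab]
    exact I.mul_mem_right _ hi₀
  have hI : I = Ideal.span {m} ^ k * I.colon {m ^ k} := by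
    ext i
    rw [Ideal.span_singleton_pow, Ideal.mem_span_singleton_mul]
    constructor
    · intro hi
      obtain ⟨c, hc⟩ := hdvd i hi
      obtain ⟨a, -, rfl⟩ := exists_mem_maximalIdeal_eq_mul hg hM (x := m ^ k)
        (b := g m * (↑u⁻¹ * c))
        (Ideal.mul_mem_right _ _ (hm.maximalIdeal_eq ▸ Ideal.mem_span_singleton_self _))
        (by rw [hc, hu', map_pow]; ring)
      exact ⟨a, by simpa [mul_comm] using hi, rfl⟩
    · rintro ⟨a, ha, rfl⟩
      simpa [mul_comm] using ha
  exact ⟨k, _, by simpa using hmk, hsq, hI⟩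

end

theorem TAF_of_MM_DVR_general {D : Type*} [CommRing D] [IsDomain D] [IsLocalRing D]
    (B : Subring (FractionRing D))
    (hB : ∀ x : FractionRing D, x ∈ B ↔ ∀ m ∈ IsLocalRing.maximalIdeal D,
      ∃ m' ∈ IsLocalRing.maximalIdeal D,
        x * algebraMap D (FractionRing D) m = algebraMap D (FractionRing D) m')
    (hDVR : IsDiscreteValuationRing B)
    (hmax : ∀ x : B, ¬ IsUnit x ↔ ∃ m ∈ IsLocalRing.maximalIdeal D,
      (x : FractionRing D) = algebraMap D (FractionRing D) m) :
    ∀ I : Ideal D, I ≠ ⊥ → I ≠ ⊤ →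
      ∃ (n : ℕ) (J : Fin n → Ideal D),
        (∀ i, J i ≠ ⊤ ∧ IsTwoAbsorbing (J i)) ∧ I = ∏ i, J i := by
  intro I hI0 hIT
  have hDB (d : D) : algebraMap D (FractionRing D) d ∈ B :=
    (hB _).mpr fun a ha => ⟨d * a, Ideal.mul_mem_left _ d ha, (map_mul _ _ _).symm⟩
  let g : D →+* B := (algebraMap D (FractionRing D)).codRestrict B hDB
  have hg : Function.Injective g := fun x y h =>
    IsFractionRing.injective D (FractionRing D) (congrArg Subtype.val h)
  have hM : g '' maximalIdeal D = maximalIdeal B := by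
    ext b
    rw [SetLike.mem_coe, mem_maximalIdeal, mem_nonunits_iff, hmax]
    simp [g, Subtype.ext_iff, eq_comm]
  obtain ⟨ϖ, hϖ⟩ := IsDiscreteValuationRing.exists_irreducible B
  obtain ⟨m, -, rfl⟩ : ϖ ∈ g '' maximalIdeal D := hM ▸ hϖ.not_isUnit
  obtain ⟨k, J, hJ, hMJ, rfl⟩ := exists_eq_span_singleton_pow_mul hg hM hϖ hI0 hIT
  refine ⟨k + 1, Fin.cons J fun _ => Ideal.span {m}, Fin.cases ?_ fun _ => ?_, ?_⟩
  · rw [Fin.prod_cons, Fin.prod_const, mul_comm]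
  · exact ⟨hJ, isTwoAbsorbing_of_maximalIdeal_sq_le hMJ⟩
  · exact ⟨fun h => hϖ.not_isUnit ((Ideal.span_singleton_eq_top.mp h).map g),
      isTwoAbsorbing_of_maximalIdeal_sq_le (maximalIdeal_sq_le_span_singleton hg hM hϖ)⟩

theorem TAF_of_MM_DVR {D : Type*} [CommRing D] [IsDomain D] [IsLocalRing D]
    (hnf : ¬ IsField D) (B : Subring (FractionRing D))
    (hB : ∀ x : FractionRing D, x ∈ B ↔ ∀ m ∈ IsLocalRing.maximalIdeal D,
      ∃ m' ∈ IsLocalRing.maximalIdeal D,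
        x * algebraMap D (FractionRing D) m = algebraMap D (FractionRing D) m')
    (hDVR : IsDiscreteValuationRing B)
    (hmax : ∀ x : B, ¬ IsUnit x ↔ ∃ m ∈ IsLocalRing.maximalIdeal D,
      (x : FractionRing D) = algebraMap D (FractionRing D) m) :
    ∀ I : Ideal D, I ≠ ⊥ → I ≠ ⊤ →
      ∃ (n : ℕ) (J : Fin n → Ideal D),
        (∀ i, J i ≠ ⊤ ∧ IsTwoAbsorbing (J i)) ∧ I = ∏ i, J i :=
  TAF_of_MM_DVR_general B hB hDVR hmax
end

section
/- A local domain (D, M), not a field, is an atomic pseudo-valuation domain if and only if it is a pseudo-valuation domain satisfying ACCP (ascending chain condition on principal ideals), and both are equivalent to (M : M) being a discrete valuation ring with maximal ideal M. -/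
/-- A pseudo-valuation domain: for x, y in the quotient field outside M, xy is outside M. -/
def IsPVD (D : Type*) [CommRing D] [IsDomain D] [IsLocalRing D] : Prop :=
  ∀ x y : FractionRing D,
    (¬ ∃ m ∈ IsLocalRing.maximalIdeal D, x = algebraMap D (FractionRing D) m) →
    (¬ ∃ m ∈ IsLocalRing.maximalIdeal D, y = algebraMap D (FractionRing D) m) →
    ¬ ∃ m ∈ IsLocalRing.maximalIdeal D, x * y = algebraMap D (FractionRing D) m

/-- Atomic: every nonzero nonunit is a product of irreducible elements. -/
def IsAtomicDomain (D : Type*) [CommRing D] [IsDomain D] : Prop :=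
  ∀ x : D, x ≠ 0 → ¬IsUnit x →
    ∃ l : Multiset D, (∀ a ∈ l, Irreducible a) ∧ Associated l.prod x

/-- ACCP: every ascending chain of principal ideals stabilizes. -/
def HasACCP (D : Type*) [CommRing D] : Prop :=
  ∀ f : ℕ → Ideal D, (∀ n, (f n).IsPrincipal) → (∀ n, f n ≤ f (n + 1)) →
    ∃ N, ∀ n, N ≤ n → f n = f N

/-- (M : M) is a DVR with maximal ideal M. -/
def MMisDVR (D : Type*) [CommRing D] [IsDomain D] [IsLocalRing D] : Prop :=
  ∃ B : Subring (FractionRing D),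
    (∀ x : FractionRing D, x ∈ B ↔ ∀ m ∈ IsLocalRing.maximalIdeal D,
      ∃ m' ∈ IsLocalRing.maximalIdeal D,
        x * algebraMap D (FractionRing D) m = algebraMap D (FractionRing D) m') ∧
    IsDiscreteValuationRing B ∧
    (∀ x : B, ¬ IsUnit x ↔ ∃ m ∈ IsLocalRing.maximalIdeal D,
      (x : FractionRing D) = algebraMap D (FractionRing D) m)

/-!
Let `V = (M : M)` inside the quotient field `K`. A local domain is a PVD exactly when `x⁻¹ ∈ V`
for every `x ∈ K` outside `M`; then `V` is a valuation ring whose non-units are exactly `M`.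
The images of atoms of `D` stay irreducible in `V`, so if `D` is atomic then so is `V`, and since
divisibility in a valuation ring is total, all irreducibles of `V` are associated: `V` is a DVR.
Conversely, if `V` is a DVR with maximal ideal `M`, comparing numerator and denominator in `V`
shows `x ∈ V` or `x⁻¹ ∈ V`, which makes `D` a PVD; and `D → V` reflects units, so the
well-foundedness of strict divisibility in the noetherian ring `V` pulls back to ACCP on `D`,
which in turn yields atomicity.
-/

open IsLocalRing

section Factorization

variable {R : Type*} [CommRing R] [IsDomain R]

theorem hasACCP_iff_wfDvdMonoid : HasACCP R ↔ WfDvdMonoid R := by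
  constructor
  · intro h
    have : WellFoundedGT {I : Ideal R // I.IsPrincipal} := by
      rw [wellFoundedGT_iff_monotone_chain_condition]
      intro a
      obtain ⟨N, hN⟩ := h (fun n => a n) (fun n => (a n).2) (fun n => a.mono n.le_succ)
      exact ⟨N, fun n hn => Subtype.ext (hN n hn).symm⟩
    exact WfDvdMonoid.of_setOfPred_isPrincipal_wellFoundedOn_gt this.wf
  · intro _ f hf hmono
    have : WellFoundedGT {I : Ideal R // I.IsPrincipal} :=
      ⟨Ideal.setOfPred_isPrincipal_wellFoundedOn_gt⟩
    let chain : ℕ →o {I : Ideal R // I.IsPrincipal} :=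
      ⟨fun n => ⟨f n, hf n⟩, monotone_nat_of_le_succ hmono⟩
    obtain ⟨N, hN⟩ := WellFoundedGT.monotone_chain_condition chain
    exact ⟨N, fun n hn => congrArg Subtype.val (hN n hn).symm⟩

theorem isAtomicDomain_of_wfDvdMonoid [WfDvdMonoid R] : IsAtomicDomain R :=
  fun x hx _ => WfDvdMonoid.exists_factors x hx

end Factorization

theorem WfDvdMonoid.of_injective_of_isLocalHom {M N F : Type*} [CommMonoidWithZero M]
    [CommMonoidWithZero N] [WfDvdMonoid N] [FunLike F M N] [MonoidWithZeroHomClass F M N]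
    (f : F) [IsLocalHom f] (hf : Function.Injective f) : WfDvdMonoid M :=
  ⟨Subrelation.wf
    (fun {_ _} ⟨ha, c, hc, hb⟩ =>
      ⟨(map_ne_zero_iff f hf).2 ha, f c, mt (IsUnit.of_map f c) hc, by rw [hb, map_mul]⟩)
    (InvImage.wf f wellFounded_dvdNotUnit)⟩

theorem Multiset.associated_pow_card_prod {M : Type*} [CommMonoid M] {p : M} {l : Multiset M}
    (h : ∀ q ∈ l, Associated p q) : Associated (p ^ Multiset.card l) l.prod := by
  induction l using Multiset.induction_on with
  | empty => simp
  | cons q l ih =>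
    rw [Multiset.prod_cons, Multiset.card_cons, pow_succ']
    exact (h q (Multiset.mem_cons_self q l)).mul_mul
      (ih fun r hr => h r (Multiset.mem_cons_of_mem hr))

theorem Irreducible.associated_of_valuationRing {V : Type*} [CommRing V] [IsDomain V]
    [ValuationRing V] {p q : V} (hp : Irreducible p) (hq : Irreducible q) : Associated p q := by
  rcases ValuationRing.dvd_total p q with h | h
  · exact hp.associated_of_dvd hq h
  · exact (hq.associated_of_dvd hp h).symm

theorem IsDiscreteValuationRing.of_valuationRing_of_isAtomicDomain {V : Type*} [CommRing V]
    [IsDomain V] [ValuationRing V] (hA : IsAtomicDomain V) (hV : ¬ IsField V) :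
    IsDiscreteValuationRing V := by
  obtain ⟨x, hx0, hxu⟩ : ∃ x : V, x ≠ 0 ∧ ¬ IsUnit x := by
    by_contra! h
    exact hV ⟨⟨0, 1, zero_ne_one⟩, mul_comm, fun hx => (h _ hx).exists_right_inv⟩
  obtain ⟨p, hp⟩ : ∃ p : V, Irreducible p := by
    obtain ⟨l, hl, hassoc⟩ := hA x hx0 hxu
    obtain rfl | ⟨p, hpl⟩ := Multiset.empty_or_exists_mem l
    · exact absurd (associated_one_iff_isUnit.1 hassoc.symm) hxu
    · exact ⟨p, hl p hpl⟩
  refine ofHasUnitMulPowIrreducibleFactorization ⟨p, hp, fun {y} hy0 => ?_⟩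
  by_cases hyu : IsUnit y
  · exact ⟨0, by simpa using (associated_one_iff_isUnit.2 hyu).symm⟩
  obtain ⟨l, hl, hassoc⟩ := hA y hy0 hyu
  exact ⟨Multiset.card l, (Multiset.associated_pow_card_prod fun q hq =>
    hp.associated_of_valuationRing (hl q hq)).trans hassoc⟩

theorem Subring.mem_or_inv_mem_of_valuationRing {A K : Type*} [CommRing A] [IsDomain A]
    [Field K] [Algebra A K] [IsFractionRing A K] (V : Subring K) [ValuationRing V]
    (hA : ∀ a, algebraMap A K a ∈ V) (x : K) : x ∈ V ∨ x⁻¹ ∈ V := by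
  obtain ⟨a, b, hb, rfl⟩ := IsFractionRing.div_surjective (A := A) x
  have hb0 : algebraMap A K b ≠ 0 := IsFractionRing.to_map_ne_zero_of_mem_nonZeroDivisors hb
  rcases ValuationRing.dvd_total (⟨_, hA a⟩ : V) ⟨_, hA b⟩ with ⟨c, hc⟩ | ⟨c, hc⟩
  · right
    rcases eq_or_ne (algebraMap A K a) 0 with ha0 | ha0
    · simp [ha0]
    · have hc : algebraMap A K b = algebraMap A K a * c := congrArg Subtype.val hc
      rw [inv_div, hc, mul_div_cancel_left₀ _ ha0]
      exact c.2
  · left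
    have hc : algebraMap A K a = algebraMap A K b * c := congrArg Subtype.val hc
    rw [hc, mul_div_cancel_left₀ _ hb0]
    exact c.2

section MaximalIdealColon

variable (D : Type*) [CommRing D] [IsLocalRing D]

-- Both sets are written in the shape used by `IsPVD` and `MMisDVR`, so that membership unfolds
-- definitionally to the clauses of those definitions.
def maxIdealImage : Set (FractionRing D) :=
  {x | ∃ m ∈ maximalIdeal D, x = algebraMap D (FractionRing D) m}

def maxIdealColon : Subring (FractionRing D) where
  carrier := {x | ∀ m ∈ maximalIdeal D, ∃ m' ∈ maximalIdeal D,
    x * algebraMap D (FractionRing D) m = algebraMap D (FractionRing D) m'}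
  one_mem' m hm := ⟨m, hm, one_mul _⟩
  mul_mem' {x y} hx hy m hm := by
    obtain ⟨m', hm', h'⟩ := hy m hm
    obtain ⟨m'', hm'', h''⟩ := hx m' hm'
    exact ⟨m'', hm'', by rw [mul_assoc, h', h'']⟩
  zero_mem' _ _ := ⟨0, zero_mem _, by simp⟩
  add_mem' {x y} hx hy m hm := by
    obtain ⟨m₁, hm₁, h₁⟩ := hx m hm
    obtain ⟨m₂, hm₂, h₂⟩ := hy m hm
    exact ⟨m₁ + m₂, add_mem hm₁ hm₂, by rw [add_mul, h₁, h₂, map_add]⟩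
  neg_mem' {x} hx m hm := by
    obtain ⟨m₁, hm₁, h₁⟩ := hx m hm
    exact ⟨-m₁, neg_mem hm₁, by rw [neg_mul, h₁, map_neg]⟩

variable {D}

theorem mul_mem_maxIdealImage {v y : FractionRing D} (hv : v ∈ maxIdealColon D)
    (hy : y ∈ maxIdealImage D) : v * y ∈ maxIdealImage D := by
  obtain ⟨m, hm, rfl⟩ := hy
  exact hv m hm

theorem zero_mem_maxIdealImage : (0 : FractionRing D) ∈ maxIdealImage D :=
  ⟨0, zero_mem _, (map_zero _).symm⟩

theorem one_notMem_maxIdealImage [IsDomain D] : (1 : FractionRing D) ∉ maxIdealImage D := by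
  rintro ⟨m, hm, h⟩
  rw [← map_one (algebraMap D _), (IsFractionRing.injective D _).eq_iff] at h
  exact (maximalIdeal.isMaximal D).ne_top ((Ideal.eq_top_iff_one _).2 (h ▸ hm))

theorem algebraMap_mem_maxIdealColon (d : D) :
    algebraMap D (FractionRing D) d ∈ maxIdealColon D :=
  fun m hm => ⟨d * m, Ideal.mul_mem_left _ _ hm, (map_mul _ _ _).symm⟩

theorem maxIdealImage_subset_maxIdealColon : maxIdealImage D ⊆ maxIdealColon D := by
  rintro _ ⟨m, -, rfl⟩
  exact algebraMap_mem_maxIdealColon m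

theorem not_isUnit_of_mem_maxIdealImage [IsDomain D] {v : maxIdealColon D}
    (hv : (v : FractionRing D) ∈ maxIdealImage D) : ¬ IsUnit v := by
  rintro ⟨u, rfl⟩
  have h : ((u⁻¹ : (maxIdealColon D)ˣ) : FractionRing D) * u = 1 := by
    exact_mod_cast congrArg Subtype.val u.inv_mul
  exact one_notMem_maxIdealImage (h ▸ mul_mem_maxIdealImage (u⁻¹ : (maxIdealColon D)ˣ).1.2 hv)

variable (D) in
noncomputable def toMaxIdealColon : D →+* maxIdealColon D :=
  (algebraMap D (FractionRing D)).codRestrict _ algebraMap_mem_maxIdealColon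

theorem toMaxIdealColon_injective [IsDomain D] : Function.Injective (toMaxIdealColon D) :=
  fun _ _ h => IsFractionRing.injective D (FractionRing D) (congrArg Subtype.val h)

instance [IsDomain D] : IsLocalHom (toMaxIdealColon D) where
  map_nonunit d hd := by
    by_contra hdu
    exact not_isUnit_of_mem_maxIdealImage ⟨d, (mem_maximalIdeal _).2 hdu, rfl⟩ hd

theorem isPVD_iff_inv_mem_maxIdealColon [IsDomain D] :
    IsPVD D ↔ ∀ x ∉ maxIdealImage D, x⁻¹ ∈ maxIdealColon D := by
  have ne_zero {x : FractionRing D} (hx : x ∉ maxIdealImage D) : x ≠ 0 :=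
    fun h => hx (h ▸ zero_mem_maxIdealImage)
  constructor
  · intro hP x hx m hm
    by_contra hxm
    refine hP x (x⁻¹ * algebraMap D _ m) hx (fun h => hxm ?_) ⟨m, hm, ?_⟩
    · obtain ⟨m', hm', h⟩ := h
      exact ⟨m', hm', h⟩
    · rw [mul_inv_cancel_left₀ (ne_zero hx)]
  · intro h x y hx hy hxy
    have hy' := mul_mem_maxIdealImage (h x hx) hxy
    rw [inv_mul_cancel_left₀ (ne_zero hx)] at hy'
    exact hy hy'

end MaximalIdealColon

section PVD

variable {D : Type*} [CommRing D] [IsDomain D] [IsLocalRing D]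

theorem IsPVD.mem_or_inv_mem_maxIdealColon (hP : IsPVD D) (x : FractionRing D) :
    x ∈ maxIdealColon D ∨ x⁻¹ ∈ maxIdealColon D := by
  by_cases hx : x ∈ maxIdealImage D
  · exact Or.inl (maxIdealImage_subset_maxIdealColon hx)
  · exact Or.inr (isPVD_iff_inv_mem_maxIdealColon.1 hP x hx)

theorem IsPVD.valuationRing_maxIdealColon (hP : IsPVD D) : ValuationRing (maxIdealColon D) :=
  inferInstanceAs <| ValuationRing
    ({ maxIdealColon D with mem_or_inv_mem' := hP.mem_or_inv_mem_maxIdealColon } :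
      ValuationSubring (FractionRing D))

theorem IsPVD.not_isUnit_iff_mem_maxIdealImage (hP : IsPVD D) (v : maxIdealColon D) :
    ¬ IsUnit v ↔ (v : FractionRing D) ∈ maxIdealImage D := by
  refine ⟨fun hvu => ?_, not_isUnit_of_mem_maxIdealImage⟩
  by_contra hv
  have hv0 : (v : FractionRing D) ≠ 0 := fun h => hv (h ▸ zero_mem_maxIdealImage)
  exact hvu (.of_mul_eq_one ⟨_, isPVD_iff_inv_mem_maxIdealColon.1 hP _ hv⟩
    (Subtype.ext (mul_inv_cancel₀ hv0)))

theorem IsPVD.irreducible_toMaxIdealColon (hP : IsPVD D) {a : D} (ha : Irreducible a) :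
    Irreducible (toMaxIdealColon D a) := by
  refine irreducible_iff.2
    ⟨not_isUnit_of_mem_maxIdealImage ⟨a, (mem_maximalIdeal _).2 ha.not_isUnit, rfl⟩,
      fun y z hyz => ?_⟩
  by_contra! h
  obtain ⟨m₁, hm₁, hy⟩ := (hP.not_isUnit_iff_mem_maxIdealImage y).1 h.1
  obtain ⟨m₂, hm₂, hz⟩ := (hP.not_isUnit_iff_mem_maxIdealImage z).1 h.2
  have hfactor : a = m₁ * m₂ := IsFractionRing.injective D (FractionRing D) <| by
    rw [map_mul, ← hy, ← hz]
    exact congrArg Subtype.val hyz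
  rcases ha.isUnit_or_isUnit hfactor with hu | hu
  exacts [(mem_maximalIdeal _).1 hm₁ hu, (mem_maximalIdeal _).1 hm₂ hu]

theorem IsPVD.isAtomicDomain_maxIdealColon (hP : IsPVD D) (hA : IsAtomicDomain D) :
    IsAtomicDomain (maxIdealColon D) := by
  intro v hv0 hvu
  obtain ⟨m, hm, hvm⟩ := (hP.not_isUnit_iff_mem_maxIdealImage v).1 hvu
  have hv : v = toMaxIdealColon D m := Subtype.ext hvm
  have hm0 : m ≠ 0 := by
    rintro rfl
    exact hv0 (by rw [hv, map_zero])
  obtain ⟨l, hl, hassoc⟩ := hA m hm0 ((mem_maximalIdeal _).1 hm)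
  refine ⟨l.map (toMaxIdealColon D), ?_, ?_⟩
  · simp only [Multiset.mem_map, forall_exists_index, and_imp, forall_apply_eq_imp_iff₂]
    exact fun a ha => hP.irreducible_toMaxIdealColon (hl a ha)
  · rw [← map_multiset_prod, hv]
    exact hassoc.map _

theorem not_isField_maxIdealColon (hD : ¬ IsField D) : ¬ IsField (maxIdealColon D) := by
  intro hV
  obtain ⟨m, hm, hm0⟩ := Submodule.exists_mem_ne_zero_of_ne_bot
    (Ring.ne_bot_of_isMaximal_of_not_isField (maximalIdeal.isMaximal D) hD)
  obtain ⟨w, hw⟩ := hV.mul_inv_cancel ((map_ne_zero_iff _ toMaxIdealColon_injective).2 hm0)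
  exact not_isUnit_of_mem_maxIdealImage (v := toMaxIdealColon D m) ⟨m, hm, rfl⟩
    (.of_mul_eq_one w hw)

theorem IsPVD.isDiscreteValuationRing_maxIdealColon (hP : IsPVD D) (hA : IsAtomicDomain D)
    (hD : ¬ IsField D) : IsDiscreteValuationRing (maxIdealColon D) :=
  haveI := hP.valuationRing_maxIdealColon
  .of_valuationRing_of_isAtomicDomain (hP.isAtomicDomain_maxIdealColon hA)
    (not_isField_maxIdealColon hD)

theorem isPVD_of_valuationRing_maxIdealColon [ValuationRing (maxIdealColon D)]
    (h : ∀ v : maxIdealColon D, (v : FractionRing D) ∉ maxIdealImage D → IsUnit v) :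
    IsPVD D := by
  refine isPVD_iff_inv_mem_maxIdealColon.2 fun x hx => ?_
  rcases (maxIdealColon D).mem_or_inv_mem_of_valuationRing algebraMap_mem_maxIdealColon x
    with hxV | hxV
  · obtain ⟨w, hw⟩ := (h ⟨x, hxV⟩ hx).exists_right_inv
    rw [inv_eq_of_mul_eq_one_right (congrArg Subtype.val hw)]
    exact w.2
  · exact hxV

theorem hasACCP_of_wfDvdMonoid_maxIdealColon [WfDvdMonoid (maxIdealColon D)] : HasACCP D :=
  hasACCP_iff_wfDvdMonoid.2
    (.of_injective_of_isLocalHom (toMaxIdealColon D) toMaxIdealColon_injective)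

theorem mmisDVR_iff : MMisDVR D ↔ IsDiscreteValuationRing (maxIdealColon D) ∧
    ∀ v : maxIdealColon D, ¬ IsUnit v ↔ (v : FractionRing D) ∈ maxIdealImage D := by
  constructor
  · rintro ⟨B, hB, hDVR, hunit⟩
    obtain rfl : B = maxIdealColon D := SetLike.ext hB
    exact ⟨hDVR, hunit⟩
  · rintro ⟨hDVR, hunit⟩
    exact ⟨maxIdealColon D, fun _ => Iff.rfl, hDVR, hunit⟩

end PVD

theorem atomic_PVD_iff_ACCP_PVD_iff_MM_DVR (D : Type*) [CommRing D] [IsDomain D]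
    [IsLocalRing D] (hnf : ¬ IsField D) :
    ((IsPVD D ∧ IsAtomicDomain D) ↔ (IsPVD D ∧ HasACCP D)) ∧
    ((IsPVD D ∧ IsAtomicDomain D) ↔ MMisDVR D) := by
  have pvd_atomic_imp_dvr : IsPVD D ∧ IsAtomicDomain D → MMisDVR D := fun ⟨hP, hA⟩ =>
    mmisDVR_iff.2 ⟨hP.isDiscreteValuationRing_maxIdealColon hA hnf,
      hP.not_isUnit_iff_mem_maxIdealImage⟩
  have dvr_imp_pvd_accp : MMisDVR D → IsPVD D ∧ HasACCP D := fun h => by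
    obtain ⟨_, hunit⟩ := mmisDVR_iff.1 h
    exact ⟨isPVD_of_valuationRing_maxIdealColon fun v hv => not_not.1 (mt (hunit v).1 hv),
      hasACCP_of_wfDvdMonoid_maxIdealColon⟩
  have accp_imp_atomic : HasACCP D → IsAtomicDomain D := fun h =>
    haveI := hasACCP_iff_wfDvdMonoid.1 h
    isAtomicDomain_of_wfDvdMonoid
  exact ⟨⟨fun h => ⟨h.1, (dvr_imp_pvd_accp (pvd_atomic_imp_dvr h)).2⟩,
      fun h => ⟨h.1, accp_imp_atomic h.2⟩⟩,
    pvd_atomic_imp_dvr, fun h => ⟨(dvr_imp_pvd_accp h).1, accp_imp_atomic (dvr_imp_pvd_accp h).2⟩⟩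
end
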